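/- arXiv:1806.02113 — 7 statements merged into one kernel-verified Lean document; each statement's English description precedes it below -/
import Mathlib

section
/- Let a1,b1,c1,a2,b2,c2 be nonnegative integers and set a3 = n - a1 - a2, b3 = n - b1 - b2, c3 = n - c1 - c2 where a1+b1+c1 = a2+b2+c2 = n. Then for every integer α, the identity a1!·b1!·c1!·C(a2,α)·C(b2,c1-α)·C(c2,b3-α) = a2!·b2!·c2!·C(a1,b3-α)·C(b1,c2-(b3-α))·C(c1,b3-(b3-α)) holds, where C(n,k) denotes the binomial coefficient (taken to be 0 when k<0 or k>n). -/
/-!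
Put `p = α`, `q = a2 - α`, `r = c1 - α`, `s = b2 - c1 + α`, `t = b3 - α`, `u = c2 - b3 + α`, so that
`a2 = q + p`, `b2 = s + r`, `c2 = u + t`, `a1 = s + t`, `b1 = q + u`, `c1 = r + p`. If one of
`p, …, u` is negative, each side contains a vanishing binomial coefficient. Otherwise each side is
`a1! b1! c1! a2! b2! c2! / (p! q! r! s! t! u!)`.
-/

/-- Binomial coefficient `C(n, k)` with an integer lower argument, defined to be `0`
when `k < 0` or `k > n`. -/
def intChoose (n : ℕ) (k : ℤ) : ℤ :=
  if 0 ≤ k then (n.choose k.toNat : ℤ) else 0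

open Nat

@[simp]
lemma intChoose_natCast (m k : ℕ) : intChoose m k = m.choose k := by
  simp [intChoose]

lemma intChoose_eq_zero_iff {m : ℕ} {k : ℤ} : intChoose m k = 0 ↔ k < 0 ∨ (m : ℤ) < k := by
  rcases lt_or_ge k 0 with hk | hk
  · simp [intChoose, not_le.mpr hk, hk]
  · lift k to ℕ using hk
    simp [Nat.choose_eq_zero_iff]

lemma Nat.factorial_mul_choose_cycle (p q r s t u : ℕ) :
    (s + t)! * (q + u)! * (r + p)! * (q + p).choose p * (s + r).choose r * (u + t).choose t =
      (q + p)! * (s + r)! * (u + t)! * (s + t).choose t * (q + u).choose u *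
        (r + p).choose p := by
  have h := Nat.add_choose_mul_factorial_mul_factorial
  refine Nat.eq_of_mul_eq_mul_right (m := p ! * q ! * r ! * s ! * t ! * u !) (by positivity) ?_
  calc _ = (s + t)! * (q + u)! * (r + p)! * ((q + p).choose p * q ! * p !) *
          ((s + r).choose r * s ! * r !) * ((u + t).choose t * u ! * t !) := by ring
    _ = (q + p)! * (s + r)! * (u + t)! * ((s + t).choose t * s ! * t !) *
          ((q + u).choose u * q ! * u !) * ((r + p).choose p * r ! * p !) := by
      rw [h, h, h, h, h, h]; ring
    _ = _ := by ring

/-- For nonnegative integers `a1,b1,c1,a2,b2,c2` with `a1+b1+c1 = a2+b2+c2 = n`, setting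
`a3 = n-a1-a2`, `b3 = n-b1-b2`, `c3 = n-c1-c2`, for every integer `α`:
`a1!·b1!·c1!·C(a2,α)·C(b2,c1-α)·C(c2,b3-α)
  = a2!·b2!·c2!·C(a1,b3-α)·C(b1,c2-(b3-α))·C(c1,b3-(b3-α))`. -/
theorem statement0 (n a1 b1 c1 a2 b2 c2 : ℕ)
    (h1 : a1 + b1 + c1 = n) (h2 : a2 + b2 + c2 = n) (α : ℤ) :
    (a1.factorial * b1.factorial * c1.factorial : ℤ) *
        intChoose a2 α * intChoose b2 ((c1 : ℤ) - α) *
        intChoose c2 (((n : ℤ) - b1 - b2) - α) =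
      (a2.factorial * b2.factorial * c2.factorial : ℤ) *
        intChoose a1 (((n : ℤ) - b1 - b2) - α) *
        intChoose b1 ((c2 : ℤ) - (((n : ℤ) - b1 - b2) - α)) *
        intChoose c1 (((n : ℤ) - b1 - b2) - (((n : ℤ) - b1 - b2) - α)) := by
  rw [show ((n : ℤ) - b1 - b2) - (((n : ℤ) - b1 - b2) - α) = α by ring]
  by_cases hsupp : 0 ≤ α ∧ α ≤ a2 ∧ α ≤ c1 ∧ c1 ≤ b2 + α ∧
      α ≤ (n : ℤ) - b1 - b2 ∧ (n : ℤ) - b1 - b2 ≤ c2 + α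
  · obtain ⟨p, hp⟩ : ∃ p : ℕ, α = p := ⟨α.toNat, by omega⟩
    obtain ⟨q, rfl⟩ : ∃ q, a2 = q + p := ⟨a2 - p, by omega⟩
    obtain ⟨r, rfl⟩ : ∃ r, c1 = r + p := ⟨c1 - p, by omega⟩
    obtain ⟨s, rfl⟩ : ∃ s, b2 = s + r := ⟨b2 - r, by omega⟩
    obtain ⟨t, rfl⟩ : ∃ t, a1 = s + t := ⟨a1 - s, by omega⟩
    obtain ⟨u, rfl⟩ : ∃ u, c2 = u + t := ⟨c2 - t, by omega⟩
    obtain rfl : b1 = q + u := by omega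
    rw [show ((n : ℤ) - ↑(q + u) - ↑(s + r)) - α = t by omega,
      show ((r + p : ℕ) : ℤ) - α = r by omega, show ((u + t : ℕ) : ℤ) - t = u by omega, hp]
    simp only [intChoose_natCast]
    exact_mod_cast Nat.factorial_mul_choose_cycle p q r s t u
  · have lhs : (a1.factorial * b1.factorial * c1.factorial : ℤ) *
        intChoose a2 α * intChoose b2 ((c1 : ℤ) - α) *
        intChoose c2 (((n : ℤ) - b1 - b2) - α) = 0 := by
      simp only [_root_.mul_eq_zero, intChoose_eq_zero_iff, Nat.cast_eq_zero, Nat.factorial_ne_zero,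
        false_or]
      omega
    have rhs : (a2.factorial * b2.factorial * c2.factorial : ℤ) *
        intChoose a1 (((n : ℤ) - b1 - b2) - α) *
        intChoose b1 ((c2 : ℤ) - (((n : ℤ) - b1 - b2) - α)) * intChoose c1 α = 0 := by
      simp only [_root_.mul_eq_zero, intChoose_eq_zero_iff, Nat.cast_eq_zero, Nat.factorial_ne_zero,
        false_or]
      omega
    rw [lhs, rhs]
end

section
/- Define M(m1,m2) for monomials m1 = x^{a1}y^{b1}z^{c1}, m2 = x^{a2}y^{b2}z^{c2} of degree n by M(m1,m2) = (-1)^{a2+b3+c1}·a1!·b1!·c1!·Σ_α (-1)^α·C(a2,α)·C(b2,c1-α)·C(c2,b3-α), where b3 = n-b1-b2. Then M(m2,m1) = (-1)^n · M(m1,m2). -/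
/-- `M(m1, m2)` for monomials `m1 = x^{a1}y^{b1}z^{c1}`, `m2 = x^{a2}y^{b2}z^{c2}` of degree `n`:
`M(m1,m2) = (-1)^{a2+b3+c1}·a1!·b1!·c1!·Σ_α (-1)^α·C(a2,α)·C(b2,c1-α)·C(c2,b3-α)`,
where `b3 = n-b1-b2`.  The sum over `α` is restricted to `0 ≤ α ≤ a2`, outside of which
all summands vanish. -/
def Mform (n a1 b1 c1 a2 b2 c2 : ℕ) : ℤ :=
  (-1) ^ (((a2 : ℤ) + ((n : ℤ) - b1 - b2) + c1).natAbs) *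
    (a1.factorial * b1.factorial * c1.factorial) *
    ∑ α ∈ Finset.range (a2 + 1),
      (-1) ^ α * intChoose a2 α * intChoose b2 ((c1 : ℤ) - α) *
        intChoose c2 (((n : ℤ) - b1 - b2) - α)



lemma nat_key (p q r s t u : ℕ) :
    ((r+t).factorial * (p+u).factorial * (q+s).factorial) *
      ((p+q).choose q * (r+s).choose s * (t+u).choose t)
    = ((p+q).factorial * (r+s).factorial * (t+u).factorial) *
      ((r+t).choose t * (p+u).choose p * (q+s).choose q) := by
  have hP : 0 < p.factorial * q.factorial * r.factorial * s.factorial * t.factorial * u.factorial :=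
    by positivity
  apply Nat.eq_of_mul_eq_mul_right hP
  have e1 := Nat.add_choose_mul_factorial_mul_factorial p q
  have e2 := Nat.add_choose_mul_factorial_mul_factorial r s
  have e3 := Nat.add_choose_mul_factorial_mul_factorial u t
  have e4 := Nat.add_choose_mul_factorial_mul_factorial r t
  have e5 := Nat.add_choose_mul_factorial_mul_factorial u p
  have e6 := Nat.add_choose_mul_factorial_mul_factorial s q
  calc ((r+t).factorial * (p+u).factorial * (q+s).factorial) *
      ((p+q).choose q * (r+s).choose s * (t+u).choose t) *
      (p.factorial * q.factorial * r.factorial * s.factorial * t.factorial * u.factorial)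
      = ((r+t).factorial * (p+u).factorial * (q+s).factorial) *
        (((p+q).choose q * p.factorial * q.factorial) * ((r+s).choose s * r.factorial * s.factorial)
          * ((t+u).choose t * u.factorial * t.factorial)) := by ring
    _ = ((r+t).factorial * (p+u).factorial * (q+s).factorial) *
        ((p+q).factorial * (r+s).factorial * (t+u).factorial) := by
          rw [e1, e2]; rw [show t+u = u+t by ring, e3]
    _ = ((p+q).factorial * (r+s).factorial * (t+u).factorial) *
        (((r+t).choose t * r.factorial * t.factorial) * ((p+u).choose p * u.factorial * p.factorial)
          * ((q+s).choose q * s.factorial * q.factorial)) := by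
          rw [e4]; rw [show p+u = u+p by ring, e5]; rw [show q+s = s+q by ring, e6]; ring
    _ = ((p+q).factorial * (r+s).factorial * (t+u).factorial) *
      ((r+t).choose t * (p+u).choose p * (q+s).choose q) *
      (p.factorial * q.factorial * r.factorial * s.factorial * t.factorial * u.factorial) := by ring


lemma intChoose_of_nonneg {m : ℕ} {k : ℤ} (h : 0 ≤ k) : intChoose m k = (m.choose k.toNat : ℤ) :=
  if_pos h

lemma intChoose_zero_of_neg {m : ℕ} {k : ℤ} (h : k < 0) : intChoose m k = 0 :=
  if_neg (by omega)

lemma intChoose_zero_of_gt {m : ℕ} {k : ℤ} (h : (m : ℤ) < k) : intChoose m k = 0 := by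
  rw [intChoose, if_pos (by omega), Nat.choose_eq_zero_of_lt (by omega)]; simp

lemma intChoose_eq (m q : ℕ) : intChoose m q = (m.choose q : ℤ) := by
  rw [intChoose_of_nonneg (by positivity), Int.toNat_natCast]

-- six entries: p q / r s / t u ; row sums a1=p+q, b1=r+s, c1=t+u; col sums a2=r+t, b2=p+u, c2=q+s
lemma key (n a1 b1 c1 a2 b2 c2 m j : ℕ)
    (h1 : a1 + b1 + c1 = n) (h2 : a2 + b2 + c2 = n)
    (hm : (m : ℤ) = (n : ℤ) - b1 - b2) (hj : j ≤ m) :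
    (a2.factorial * b2.factorial * c2.factorial : ℤ) *
      (intChoose a1 ((m : ℤ) - j) * intChoose b1 ((c2 : ℤ) - ((m : ℤ) - j)) * intChoose c1 (j : ℤ))
    = (a1.factorial * b1.factorial * c1.factorial : ℤ) *
      (intChoose a2 (j : ℤ) * intChoose b2 ((c1 : ℤ) - j) * intChoose c2 ((m : ℤ) - j)) := by
  -- entries: t = j, q = m - j, u = c1 - j, r = a2 - j, p = b2 - c1 + j, s = b1 - a2 + j
  by_cases hu : (c1 : ℤ) - j < 0
  · rw [intChoose_zero_of_gt (by omega : (c1:ℤ) < (j:ℤ)), intChoose_zero_of_neg hu]; ring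
  by_cases hr : (a2 : ℤ) - j < 0
  · rw [intChoose_zero_of_gt (by omega : (a2:ℤ) < (j:ℤ)),
      intChoose_zero_of_gt (by omega : (b1:ℤ) < (c2 : ℤ) - ((m : ℤ) - j))]; ring
  by_cases hp : (b2 : ℤ) - c1 + j < 0
  · rw [intChoose_zero_of_gt (by omega : (a1:ℤ) < (m : ℤ) - j),
      intChoose_zero_of_gt (by omega : (b2:ℤ) < (c1 : ℤ) - j)]; ring
  by_cases hs : (b1 : ℤ) - a2 + j < 0
  · rw [intChoose_zero_of_neg (by omega : (c2 : ℤ) - ((m : ℤ) - j) < 0),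
      intChoose_zero_of_gt (by omega : (c2:ℤ) < (m : ℤ) - j)]; ring
  -- valid case
  obtain ⟨p, hp'⟩ : ∃ p : ℕ, (p : ℤ) = (b2 : ℤ) - c1 + j := ⟨((b2:ℤ) - c1 + j).toNat, by omega⟩
  obtain ⟨q, hq'⟩ : ∃ q : ℕ, (q : ℤ) = (m : ℤ) - j := ⟨((m:ℤ) - j).toNat, by omega⟩
  obtain ⟨r, hr'⟩ : ∃ r : ℕ, (r : ℤ) = (a2 : ℤ) - j := ⟨((a2:ℤ) - j).toNat, by omega⟩
  obtain ⟨s, hs'⟩ : ∃ s : ℕ, (s : ℤ) = (b1 : ℤ) - a2 + j := ⟨((b1:ℤ) - a2 + j).toNat, by omega⟩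
  obtain ⟨u, hu'⟩ : ∃ u : ℕ, (u : ℤ) = (c1 : ℤ) - j := ⟨((c1:ℤ) - j).toNat, by omega⟩
  have ea1 : a1 = p + q := by omega
  have eb1 : b1 = r + s := by omega
  have ec1 : c1 = j + u := by omega
  have ea2 : a2 = r + j := by omega
  have eb2 : b2 = p + u := by omega
  have ec2 : c2 = q + s := by omega
  have k1 : intChoose a1 ((m : ℤ) - j) = (a1.choose q : ℤ) := by rw [← hq', intChoose_eq]
  have k2' : intChoose b1 ((c2 : ℤ) - ((m : ℤ) - j)) = (b1.choose s : ℤ) := by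
    rw [show (c2 : ℤ) - ((m : ℤ) - j) = (s : ℤ) by omega, intChoose_eq]
  have k3 : intChoose c1 (j : ℤ) = (c1.choose j : ℤ) := intChoose_eq _ _
  have k4 : intChoose a2 (j : ℤ) = (a2.choose j : ℤ) := intChoose_eq _ _
  have k5 : intChoose b2 ((c1 : ℤ) - j) = (b2.choose u : ℤ) := by rw [← hu', intChoose_eq]
  have k6 : intChoose c2 ((m : ℤ) - j) = (c2.choose q : ℤ) := by rw [← hq', intChoose_eq]
  rw [k1, k2', k3, k4, k5, k6]
  have hnk := nat_key p q r s j u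
  have hsym : (p+u).choose p = (p+u).choose u := by
    rw [← Nat.choose_symm (Nat.le_add_left u p)]; congr 1; omega
  rw [hsym] at hnk
  rw [ea1, eb1, ec1, ea2, eb2, ec2]
  exact_mod_cast congrArg (Nat.cast : ℕ → ℤ) hnk

lemma neg_one_pow_parity (a b : ℕ) (h : a % 2 = b % 2) : ((-1 : ℤ)) ^ a = (-1) ^ b := by
  rcases Nat.mod_two_eq_zero_or_one a with ha | ha
  · rw [(Nat.even_iff.mpr ha).neg_one_pow,
      (Nat.even_iff.mpr (by omega : b % 2 = 0)).neg_one_pow]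
  · rw [(Nat.odd_iff.mpr ha).neg_one_pow,
      (Nat.odd_iff.mpr (by omega : b % 2 = 1)).neg_one_pow]

/-- `M(m2, m1) = (-1)^n · M(m1, m2)`. -/
theorem statement1 (n a1 b1 c1 a2 b2 c2 : ℕ)
    (h1 : a1 + b1 + c1 = n) (h2 : a2 + b2 + c2 = n) :
    Mform n a2 b2 c2 a1 b1 c1 = (-1) ^ n * Mform n a1 b1 c1 a2 b2 c2 := by
  unfold Mform
  by_cases hb3 : (n : ℤ) - b1 - b2 < 0
  · have z1 : (∑ α ∈ Finset.range (a1 + 1),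
        (-1) ^ α * intChoose a1 α * intChoose b1 ((c2 : ℤ) - α) *
          intChoose c1 (((n : ℤ) - b2 - b1) - α)) = 0 :=
      Finset.sum_eq_zero fun α _ => by
        rw [intChoose_zero_of_neg
          (show (n : ℤ) - b2 - b1 - (α : ℤ) < 0 by omega)]; ring
    have z2 : (∑ α ∈ Finset.range (a2 + 1),
        (-1) ^ α * intChoose a2 α * intChoose b2 ((c1 : ℤ) - α) *
          intChoose c2 (((n : ℤ) - b1 - b2) - α)) = 0 :=
      Finset.sum_eq_zero fun α _ => by
        rw [intChoose_zero_of_neg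
          (show (n : ℤ) - b1 - b2 - (α : ℤ) < 0 by omega)]; ring
    rw [z1, z2]; ring
  · obtain ⟨m, hm⟩ : ∃ m : ℕ, (m : ℤ) = (n : ℤ) - b1 - b2 :=
      ⟨((n : ℤ) - b1 - b2).toNat, by omega⟩
    have hmn : m ≤ n := by omega
    set f : ℕ → ℤ := fun α => (-1) ^ α * intChoose a1 α * intChoose b1 ((c2 : ℤ) - α) *
      intChoose c1 ((m : ℤ) - α) with hf
    set g : ℕ → ℤ := fun β => (-1) ^ β * intChoose a2 β * intChoose b2 ((c1 : ℤ) - β) *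
      intChoose c2 ((m : ℤ) - β) with hg
    have ef : (∑ α ∈ Finset.range (a1 + 1),
        (-1) ^ α * intChoose a1 α * intChoose b1 ((c2 : ℤ) - α) *
          intChoose c1 (((n : ℤ) - b2 - b1) - α)) = ∑ α ∈ Finset.range (a1 + 1), f α :=
      Finset.sum_congr rfl fun α _ => by
        rw [show (n : ℤ) - b2 - b1 - α = (m : ℤ) - α by omega]
    have eg : (∑ α ∈ Finset.range (a2 + 1),
        (-1) ^ α * intChoose a2 α * intChoose b2 ((c1 : ℤ) - α) *
          intChoose c2 (((n : ℤ) - b1 - b2) - α)) = ∑ β ∈ Finset.range (a2 + 1), g β :=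
      Finset.sum_congr rfl fun α _ => by
        rw [show (n : ℤ) - b1 - b2 - α = (m : ℤ) - α by omega]
    rw [ef, eg]
    -- extend/shrink both sums to range (m+1)
    have ha1n : a1 ≤ n := by omega
    have ha2n : a2 ≤ n := by omega
    have sf1 : ∑ α ∈ Finset.range (a1 + 1), f α = ∑ α ∈ Finset.range (n + 1), f α :=
      Finset.sum_subset (Finset.range_subset_range.2 (by omega)) fun α _ hα => by
        simp only [hf]
        rw [intChoose_zero_of_gt (by simp only [Finset.mem_range] at hα ⊢; omega :
          (a1 : ℤ) < (α : ℤ))]; ring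
    have sf2 : ∑ α ∈ Finset.range (m + 1), f α = ∑ α ∈ Finset.range (n + 1), f α :=
      Finset.sum_subset (Finset.range_subset_range.2 (by omega)) fun α _ hα => by
        simp only [hf]
        rw [intChoose_zero_of_neg (by simp only [Finset.mem_range] at hα; omega :
          (m : ℤ) - α < 0)]; ring
    have sg1 : ∑ β ∈ Finset.range (a2 + 1), g β = ∑ β ∈ Finset.range (n + 1), g β :=
      Finset.sum_subset (Finset.range_subset_range.2 (by omega)) fun α _ hα => by
        simp only [hg]
        rw [intChoose_zero_of_gt (by simp only [Finset.mem_range] at hα ⊢; omega :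
          (a2 : ℤ) < (α : ℤ))]; ring
    have sg2 : ∑ β ∈ Finset.range (m + 1), g β = ∑ β ∈ Finset.range (n + 1), g β :=
      Finset.sum_subset (Finset.range_subset_range.2 (by omega)) fun α _ hα => by
        simp only [hg]
        rw [intChoose_zero_of_neg (by simp only [Finset.mem_range] at hα; omega :
          (m : ℤ) - α < 0)]; ring
    -- main identity
    have main : (a2.factorial * b2.factorial * c2.factorial : ℤ) *
        ∑ α ∈ Finset.range (a1 + 1), f α
        = (-1) ^ m * ((a1.factorial * b1.factorial * c1.factorial : ℤ) *
          ∑ β ∈ Finset.range (a2 + 1), g β) := by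
      rw [sf1, ← sf2, sg1, ← sg2]
      rw [← Finset.sum_range_reflect f (m + 1)]
      rw [Finset.mul_sum, Finset.mul_sum, Finset.mul_sum]
      refine Finset.sum_congr rfl fun j hj => ?_
      have hjm : j ≤ m := by simpa [Nat.lt_succ_iff] using hj
      have hsub : m + 1 - 1 - j = m - j := by omega
      rw [hsub]
      simp only [hf, hg]
      have c1' : ((m - j : ℕ) : ℤ) = (m : ℤ) - j := by omega
      have c2' : (m : ℤ) - ((m - j : ℕ) : ℤ) = (j : ℤ) := by omega
      rw [c2', c1']
      have hk := key n a1 b1 c1 a2 b2 c2 m j h1 h2 hm hjm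
      have hsign : ((-1 : ℤ)) ^ (m - j) * (-1) ^ j = (-1) ^ m := by
        rw [← pow_add, Nat.sub_add_cancel hjm]
      calc (a2.factorial * b2.factorial * c2.factorial : ℤ) *
            ((-1) ^ (m - j) * intChoose a1 ((m : ℤ) - j) *
              intChoose b1 ((c2 : ℤ) - ((m : ℤ) - j)) * intChoose c1 (j : ℤ))
          = (-1) ^ (m - j) * ((a2.factorial * b2.factorial * c2.factorial : ℤ) *
            (intChoose a1 ((m : ℤ) - j) * intChoose b1 ((c2 : ℤ) - ((m : ℤ) - j)) *
              intChoose c1 (j : ℤ))) := by ring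
        _ = (-1) ^ (m - j) * ((a1.factorial * b1.factorial * c1.factorial : ℤ) *
            (intChoose a2 (j : ℤ) * intChoose b2 ((c1 : ℤ) - j) *
              intChoose c2 ((m : ℤ) - j))) := by rw [hk]
        _ = ((-1 : ℤ)) ^ (m - j) * (-1) ^ j * ((a1.factorial * b1.factorial * c1.factorial : ℤ) *
            ((-1) ^ j * intChoose a2 (j : ℤ) * intChoose b2 ((c1 : ℤ) - j) *
              intChoose c2 ((m : ℤ) - j))) := by
            have : ((-1 : ℤ)) ^ j * (-1) ^ j = 1 := by
              rw [← pow_add]; exact (Even.add_self j).neg_one_pow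
            calc ((-1 : ℤ)) ^ (m - j) * ((a1.factorial * b1.factorial * c1.factorial : ℤ) *
                (intChoose a2 (j : ℤ) * intChoose b2 ((c1 : ℤ) - j) *
                  intChoose c2 ((m : ℤ) - j)))
                = ((-1 : ℤ)) ^ (m - j) * (((-1 : ℤ)) ^ j * (-1) ^ j) *
                  ((a1.factorial * b1.factorial * c1.factorial : ℤ) *
                  (intChoose a2 (j : ℤ) * intChoose b2 ((c1 : ℤ) - j) *
                    intChoose c2 ((m : ℤ) - j))) := by rw [this]; ring
              _ = _ := by ring
        _ = (-1) ^ m * ((a1.factorial * b1.factorial * c1.factorial : ℤ) *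
            ((-1) ^ j * intChoose a2 (j : ℤ) * intChoose b2 ((c1 : ℤ) - j) *
              intChoose c2 ((m : ℤ) - j))) := by rw [hsign]
    -- sign bookkeeping
    have hsgn : ((-1 : ℤ)) ^ (((a1 : ℤ) + ((n : ℤ) - b2 - b1) + c2).natAbs) * (-1) ^ m
        = (-1) ^ n * (-1) ^ (((a2 : ℤ) + ((n : ℤ) - b1 - b2) + c1).natAbs) := by
      rw [← pow_add, ← pow_add]
      apply neg_one_pow_parity
      omega
    calc (-1) ^ (((a1 : ℤ) + ((n : ℤ) - b2 - b1) + c2).natAbs) *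
          ((a2.factorial : ℤ) * b2.factorial * c2.factorial) *
          ∑ α ∈ Finset.range (a1 + 1), f α
        = (-1) ^ (((a1 : ℤ) + ((n : ℤ) - b2 - b1) + c2).natAbs) *
          (((a2.factorial : ℤ) * b2.factorial * c2.factorial) *
          ∑ α ∈ Finset.range (a1 + 1), f α) := by ring
      _ = (-1) ^ (((a1 : ℤ) + ((n : ℤ) - b2 - b1) + c2).natAbs) *
          ((-1) ^ m * ((a1.factorial * b1.factorial * c1.factorial : ℤ) *
          ∑ β ∈ Finset.range (a2 + 1), g β)) := by rw [main]
      _ = ((-1) ^ (((a1 : ℤ) + ((n : ℤ) - b2 - b1) + c2).natAbs) * (-1) ^ m) *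
          ((a1.factorial * b1.factorial * c1.factorial : ℤ) *
          ∑ β ∈ Finset.range (a2 + 1), g β) := by ring
      _ = ((-1) ^ n * (-1) ^ (((a2 : ℤ) + ((n : ℤ) - b1 - b2) + c1).natAbs)) *
          ((a1.factorial * b1.factorial * c1.factorial : ℤ) *
          ∑ β ∈ Finset.range (a2 + 1), g β) := by rw [hsgn]
      _ = _ := by ring
end

section
/- With M defined as above, if a1 ≥ 1 (i.e., x divides m1), then M(m1,m2) = b2·M(m1/x, m2/y) − c2·M(m1/x, m2/z), where a term is interpreted as 0 if the corresponding exponent b2 or c2 is 0. -/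
theorem neg_one_pow_natAbs_sub_one (t : ℤ) :
    (-1 : ℤ) ^ (t - 1).natAbs = -(-1 : ℤ) ^ t.natAbs := by
  simp only [← Int.coe_negOnePow ℤ, Int.negOnePow_sub, Int.negOnePow_one]
  push_cast
  ring

theorem natCast_mul_intChoose_pred (b : ℕ) (k : ℤ) :
    (b : ℤ) * intChoose (b - 1) k = ((b : ℤ) - k) * intChoose b k := by
  unfold intChoose
  split_ifs with hk
  · lift k to ℕ using hk
    rcases b with _ | b
    · rcases k with _ | k <;> simp
    · rcases le_or_gt k (b + 1) with hkb | hkb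
      · have := Nat.choose_mul_succ_eq b k
        rw [Int.toNat_natCast, Nat.add_sub_cancel]
        zify [hkb] at this
        push_cast
        linarith
      · simp [Nat.choose_eq_zero_of_lt, hkb, Nat.lt_of_succ_lt hkb]
  · simp

theorem natCast_mul_intChoose_pred_pred (c : ℕ) (j : ℤ) :
    (c : ℤ) * intChoose (c - 1) (j - 1) = j * intChoose c j := by
  unfold intChoose
  rcases lt_trichotomy j 0 with hj | rfl | hj
  · rw [if_neg (by omega), if_neg (by omega)]
    ring
  · simp
  · obtain ⟨k, rfl⟩ : ∃ k : ℕ, j = k + 1 := ⟨(j - 1).toNat, by omega⟩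
    rcases c with _ | c
    · simp
    · have := Nat.add_one_mul_choose_eq c k
      zify at this
      simp only [add_sub_cancel_right, Nat.add_sub_cancel]
      rw [if_pos (by positivity), if_pos (by positivity), Int.toNat_natCast,
        show ((k : ℤ) + 1).toNat = k + 1 by omega]
      push_cast
      linarith

theorem natCast_mul_intChoose_mul_intChoose (a b c : ℕ) (k j : ℤ) (h : (a : ℤ) = b - k + j) :
    (a : ℤ) * (intChoose b k * intChoose c j) =
      b * (intChoose (b - 1) k * intChoose c j) +
        c * (intChoose b k * intChoose (c - 1) (j - 1)) := by
  linear_combination -intChoose c j * natCast_mul_intChoose_pred b k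
    - intChoose b k * natCast_mul_intChoose_pred_pred c j + intChoose b k * intChoose c j * h

def MformOfB3 (b3 : ℤ) (a1 b1 c1 a2 b2 c2 : ℕ) : ℤ :=
  (-1) ^ (((a2 : ℤ) + b3 + c1).natAbs) * (a1.factorial * b1.factorial * c1.factorial) *
    ∑ α ∈ Finset.range (a2 + 1),
      (-1) ^ α * intChoose a2 α * intChoose b2 ((c1 : ℤ) - α) * intChoose c2 (b3 - α)

theorem Mform_eq_MformOfB3 (n a1 b1 c1 a2 b2 c2 : ℕ) :
    Mform n a1 b1 c1 a2 b2 c2 = MformOfB3 ((n : ℤ) - b1 - b2) a1 b1 c1 a2 b2 c2 := rfl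

theorem MformOfB3_succ (b3 : ℤ) (a b1 c1 a2 b2 c2 : ℕ) (h : (a + 1 : ℤ) = b2 + b3 - c1) :
    MformOfB3 b3 (a + 1) b1 c1 a2 b2 c2 =
      b2 * MformOfB3 b3 a b1 c1 a2 (b2 - 1) c2 -
        c2 * MformOfB3 (b3 - 1) a b1 c1 a2 b2 (c2 - 1) := by
  have hsum : ((a + 1 : ℕ) : ℤ) * ∑ α ∈ Finset.range (a2 + 1),
        (-1) ^ α * intChoose a2 α * intChoose b2 ((c1 : ℤ) - α) * intChoose c2 (b3 - α) =
      b2 * ∑ α ∈ Finset.range (a2 + 1),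
        (-1) ^ α * intChoose a2 α * intChoose (b2 - 1) ((c1 : ℤ) - α) *
          intChoose c2 (b3 - α) +
      c2 * ∑ α ∈ Finset.range (a2 + 1),
        (-1) ^ α * intChoose a2 α * intChoose b2 ((c1 : ℤ) - α) *
          intChoose (c2 - 1) (b3 - 1 - α) := by
    simp only [Finset.mul_sum, ← Finset.sum_add_distrib, sub_right_comm b3 1]
    refine Finset.sum_congr rfl fun α _ => ?_
    linear_combination (-1) ^ α * intChoose a2 α *
      natCast_mul_intChoose_mul_intChoose (a + 1) b2 c2 (c1 - α) (b3 - α) (by push_cast; omega)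
  unfold MformOfB3
  rw [show (a2 : ℤ) + (b3 - 1) + c1 = a2 + b3 + c1 - 1 by ring, neg_one_pow_natAbs_sub_one,
    Nat.factorial_succ]
  push_cast at hsum ⊢
  linear_combination (-1) ^ ((a2 : ℤ) + b3 + c1).natAbs *
    ((a.factorial : ℤ) * b1.factorial * c1.factorial) * hsum

theorem statement4_general (n a1 b1 c1 a2 b2 c2 : ℕ)
    (h1 : a1 + b1 + c1 = n) (ha1 : 1 ≤ a1) :
    Mform n a1 b1 c1 a2 b2 c2 =
      (b2 : ℤ) * Mform (n - 1) (a1 - 1) b1 c1 a2 (b2 - 1) c2 -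
        (c2 : ℤ) * Mform (n - 1) (a1 - 1) b1 c1 a2 b2 (c2 - 1) := by
  obtain ⟨a, rfl⟩ : ∃ a, a1 = a + 1 := ⟨a1 - 1, by omega⟩
  have hb : (b2 : ℤ) * Mform (n - 1) a b1 c1 a2 (b2 - 1) c2 =
      b2 * MformOfB3 ((n : ℤ) - b1 - b2) a b1 c1 a2 (b2 - 1) c2 := by
    -- for `b2 = 0` the truncated `b2 - 1` does not preserve `b3`, but the factor `b2` vanishes
    rcases b2 with _ | b2
    · simp
    · rw [Mform_eq_MformOfB3]
      congr 2
      omega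
  have hc : Mform (n - 1) a b1 c1 a2 b2 (c2 - 1) =
      MformOfB3 ((n : ℤ) - b1 - b2 - 1) a b1 c1 a2 b2 (c2 - 1) := by
    rw [Mform_eq_MformOfB3]
    congr 1
    omega
  rw [Nat.add_sub_cancel, Mform_eq_MformOfB3, hb, hc]
  exact MformOfB3_succ _ _ _ _ _ _ _ (by omega)

/-- If `x` divides `m1` (that is, `a1 ≥ 1`), then
`M(m1, m2) = b2·M(m1/x, m2/y) − c2·M(m1/x, m2/z)`, where a term is interpreted
as `0` when the corresponding exponent `b2` or `c2` is `0` (the coefficient then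
vanishes, so natural subtraction in the exponents is harmless). -/
theorem statement4 (n a1 b1 c1 a2 b2 c2 : ℕ)
    (h1 : a1 + b1 + c1 = n) (h2 : a2 + b2 + c2 = n) (ha1 : 1 ≤ a1) :
    Mform n a1 b1 c1 a2 b2 c2 =
      (b2 : ℤ) * Mform (n - 1) (a1 - 1) b1 c1 a2 (b2 - 1) c2 -
        (c2 : ℤ) * Mform (n - 1) (a1 - 1) b1 c1 a2 b2 (c2 - 1) :=
  statement4_general n a1 b1 c1 a2 b2 c2 h1 ha1
end

section
/- For the trilinear form t_n(q1,q2,q3) = ⟨J_n(q1,q2), q3⟩ on ternary forms of degree n over ℤ, and any permutation σ of {1,2,3}, one has t_n(q_{σ(1)}, q_{σ(2)}, q_{σ(3)}) = (sign σ)^n · t_n(q1,q2,q3). -/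
noncomputable section
open MvPolynomial

/-- Polynomials in the six variables `x, y, z, u, v, w` (indexed `0,…,5`). -/
abbrev Poly6 (A : Type*) [CommRing A] := MvPolynomial (Fin 6) A

variable {A : Type*} [CommRing A]

/-- The operator `v∂z − w∂y` substituted for `x`. -/
def D1 (p : Poly6 A) : Poly6 A := X 4 * pderiv 2 p - X 5 * pderiv 1 p

/-- The operator `w∂x − u∂z` substituted for `y`. -/
def D2 (p : Poly6 A) : Poly6 A := X 5 * pderiv 0 p - X 3 * pderiv 2 p

/-- The operator `u∂y − v∂x` substituted for `z`. -/
def D3 (p : Poly6 A) : Poly6 A := X 3 * pderiv 1 p - X 4 * pderiv 0 p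

/-- The bilinear map `J_n`: substitute the operators `D1, D2, D3` into the first
argument and apply the resulting differential operator to the second argument. -/
def Jn (q1 q2 : Poly6 A) : Poly6 A :=
  ∑ m ∈ q1.support, MvPolynomial.C (q1.coeff m) *
    (D1^[m 0] (D2^[m 1] (D3^[m 2] q2)))

/-- The polar pairing `⟨p, q⟩ = p(∂x, ∂y, ∂z) q`, where `p` is a form in the dual
variables `u, v, w` and `q` a form (of the same degree) in `x, y, z`; the result is
a constant, recorded via its constant coefficient. -/
def polarPair (p q : Poly6 A) : A :=
  constantCoeff (∑ m ∈ p.support, MvPolynomial.C (p.coeff m) *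
    ((fun r => pderiv 0 r)^[m 3] ((fun r => pderiv 1 r)^[m 4] ((fun r => pderiv 2 r)^[m 5] q))))

/-- The trilinear form `t_n(q1, q2, q3) = ⟨J_n(q1, q2), q3⟩`. -/
def tn (q1 q2 q3 : Poly6 A) : A := polarPair (Jn q1 q2) q3

/-- The harmonic contravariant `h_n(q) = J_n(q, q)`. -/
def hn (q : Poly6 A) : Poly6 A := Jn q q

/-- A polynomial involves only the variables `x, y, z` (indices `0, 1, 2`). -/
def OnlyXYZ (q : Poly6 A) : Prop := ∀ m ∈ q.support, m 3 = 0 ∧ m 4 = 0 ∧ m 5 = 0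

end

/-!
On monomials `q₁ = x^a y^b z^c`, `q₂ = x^a' y^b' z^c'`, `q₃ = x^a'' y^b'' z^c''` the binomial
expansion of `D1^a D2^b D3^c` turns `t_n(q₁, q₂, q₃)` into an explicit sum over splittings
`i ≤ a`, `j ≤ b`, `k ≤ c`. A term survives only when the derivatives exhaust `q₂` exactly and the
dual variables match `q₃` exactly; it is then `±` the product of all nine factorials divided by
`i! (a-i)! j! (b-j)! k! (c-k)!`, with sign `(-1)^(a-i+b-j+c-k)`. The reflection
`(i, j, k) ↦ (a-i, b-j, c-k)` matches the terms of `t_n(q₁, q₃, q₂)` with those of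
`t_n(q₁, q₂, q₃)`, and `(i, j, k) ↦ (c-k, a-i, b-j)` matches those of `t_n(q₂, q₁, q₃)`; in both
cases every sign changes by `(-1)^n`. Trilinearity extends the two transposition rules to forms,
and adjacent transpositions generate `𝔖₃`.
-/

open MvPolynomial Finset
open scoped Nat

lemma neg_one_pow_eq_pow_mul_pow_of_add_eq {R : Type*} [Monoid R] [HasDistribNeg R] {s t n : ℕ}
    (h : s + t = n) : (-1 : R) ^ s = (-1) ^ n * (-1) ^ t := by
  rw [← h, pow_add, mul_assoc, ← pow_add, ← two_mul, pow_mul, neg_one_sq, one_pow, mul_one]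

lemma Nat.descFactorial_add_eq_mul (n p q : ℕ) :
    n.descFactorial (p + q) = n.descFactorial p * (n - p).descFactorial q := by
  rw [← Nat.descFactorial_mul_descFactorial (Nat.le_add_right p q), Nat.add_sub_cancel_left,
    mul_comm]

-- Both sides equal `(u₁+u₂)! (u₃+u₄)! (u₅+u₆)! (u₆+u₃)! (u₅+u₂)! (u₄+u₁)! / (u₁! ⋯ u₆!)`.
lemma Nat.choose_mul_factorial_regroup (u₁ u₂ u₃ u₄ u₅ u₆ : ℕ) :
    (u₁ + u₂).choose u₁ * (u₃ + u₄).choose u₃ * (u₅ + u₆).choose u₅ *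
        ((u₆ + u₃)! * (u₅ + u₂)! * (u₄ + u₁)!) =
      (u₆ + u₃).choose u₆ * (u₅ + u₂).choose u₂ * (u₄ + u₁).choose u₄ *
        ((u₁ + u₂)! * (u₃ + u₄)! * (u₅ + u₆)!) := by
  have key (x y : ℕ) : (x + y).choose x * (x ! * y !) = (x + y)! := by
    rw [← Nat.add_choose_mul_factorial_mul_factorial, Nat.choose_symm_add]; ring
  have key' (x y : ℕ) : (x + y).choose y * (x ! * y !) = (x + y)! := by
    rw [← Nat.add_choose_mul_factorial_mul_factorial]; ring
  refine Nat.eq_of_mul_eq_mul_right (m := u₁ ! * u₂ ! * u₃ ! * u₄ ! * u₅ ! * u₆ !)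
    (by positivity) ?_
  calc _ = ((u₁ + u₂).choose u₁ * (u₁ ! * u₂ !)) * ((u₃ + u₄).choose u₃ * (u₃ ! * u₄ !)) *
          ((u₅ + u₆).choose u₅ * (u₅ ! * u₆ !)) * ((u₆ + u₃)! * (u₅ + u₂)! * (u₄ + u₁)!) := by ring
    _ = ((u₆ + u₃).choose u₆ * (u₆ ! * u₃ !)) * ((u₅ + u₂).choose u₂ * (u₅ ! * u₂ !)) *
          ((u₄ + u₁).choose u₄ * (u₄ ! * u₁ !)) * ((u₁ + u₂)! * (u₃ + u₄)! * (u₅ + u₆)!) := by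
      rw [key, key, key, key, key', key]; ring
    _ = _ := by ring

theorem Equiv.Perm.eq_sign_pow_mul_of_mul_swap {R : Type*} [CommRing R] {m : ℕ} (k : ℕ)
    (g : Perm (Fin (m + 1)) → R)
    (hg : ∀ σ (i : Fin m), g (σ * swap i.castSucc i.succ) = (-1) ^ k * g σ)
    (σ : Perm (Fin (m + 1))) : g σ = ((sign σ : ℤ) : R) ^ k * g 1 := by
  have hσ : σ ∈ Submonoid.closure (Set.range fun i : Fin m ↦ swap i.castSucc i.succ) := by
    rw [mclosure_swap_castSucc_succ]; trivial
  induction hσ using Submonoid.closure_induction_right with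
  | one => simp
  | mul_right τ _ _ hi ih =>
    obtain ⟨i, rfl⟩ := hi
    rw [hg, ih, sign_mul, sign_swap (Fin.castSucc_lt_succ (i := i)).ne]
    push_cast
    ring

lemma Commute.sub_pow_apply {A M : Type*} [CommRing A] [AddCommGroup M] [Module A M]
    {E F : Module.End A M} (h : Commute E F) (c : ℕ) (x : M) :
    ((E - F) ^ c) x = ∑ k ∈ range (c + 1),
      ((-1) ^ (c - k) * (c.choose k : A)) • (E ^ k) ((F ^ (c - k)) x) := by
  have hneg : E - F = E + (-1 : A) • F := by rw [neg_one_smul, sub_eq_add_neg]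
  rw [hneg, (h.smul_right _).add_pow, LinearMap.sum_apply]
  refine sum_congr rfl fun k _ => ?_
  rw [smul_pow, mul_smul_comm, smul_mul_assoc, LinearMap.smul_apply, Module.End.mul_apply,
    Module.End.mul_apply, Module.End.natCast_apply, map_nsmul, map_nsmul,
    ← Nat.cast_smul_eq_nsmul A, smul_smul]

theorem MvPolynomial.pderiv_pderiv_comm {σ R : Type*} [CommRing R] (i j : σ)
    (p : MvPolynomial σ R) : pderiv i (pderiv j p) = pderiv j (pderiv i p) := by
  have h : ⁅(pderiv i : Derivation R (MvPolynomial σ R) (MvPolynomial σ R)), pderiv (R := R) j⁆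
      = 0 := by
    refine derivation_ext fun k => ?_
    rw [Derivation.commutator_apply]
    classical simp [pderiv_X, Pi.single_apply, apply_ite]
  have := congr($h p)
  rwa [Derivation.commutator_apply, Derivation.zero_apply, sub_eq_zero] at this

section EvalOp

variable {σ A M : Type*} [CommRing A] [AddCommGroup M] [Module A M]

def evalOp (E : (σ →₀ ℕ) → Module.End A M) (p : MvPolynomial σ A) (x : M) : M :=
  ∑ m ∈ p.support, coeff m p • E m x

variable (E : (σ →₀ ℕ) → Module.End A M)

lemma evalOp_eq_sum_of_support_subset {p : MvPolynomial σ A} {s : Finset (σ →₀ ℕ)}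
    (hs : p.support ⊆ s) (x : M) : evalOp E p x = ∑ m ∈ s, coeff m p • E m x :=
  sum_subset hs fun m _ hm => by rw [notMem_support_iff.mp hm, zero_smul]

lemma evalOp_monomial (m : σ →₀ ℕ) (a : A) (x : M) : evalOp E (monomial m a) x = a • E m x := by
  classical
  rw [evalOp_eq_sum_of_support_subset E support_monomial_subset, sum_singleton, coeff_monomial,
    if_pos rfl]

lemma evalOp_add_left (p p' : MvPolynomial σ A) (x : M) :
    evalOp E (p + p') x = evalOp E p x + evalOp E p' x := by
  classical
  rw [evalOp_eq_sum_of_support_subset E support_add,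
    evalOp_eq_sum_of_support_subset E (subset_union_left (s₂ := p'.support)),
    evalOp_eq_sum_of_support_subset E (subset_union_right (s₁ := p.support))]
  simp only [coeff_add, add_smul, sum_add_distrib]

lemma evalOp_sum_left {ι : Type*} (s : Finset ι) (f : ι → MvPolynomial σ A) (x : M) :
    evalOp E (∑ i ∈ s, f i) x = ∑ i ∈ s, evalOp E (f i) x :=
  map_sum (AddMonoidHom.mk' (evalOp E · x) fun p p' => evalOp_add_left E p p' x) f s

lemma evalOp_sum_right {ι : Type*} (p : MvPolynomial σ A) (s : Finset ι) (f : ι → M) :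
    evalOp E p (∑ i ∈ s, f i) = ∑ i ∈ s, evalOp E p (f i) := by
  simp only [evalOp, map_sum, smul_sum]
  exact sum_comm

end EvalOp

noncomputable section MulXPderiv

variable {σ A : Type*} [CommRing A]

def mulXPderiv (s t : σ) : Module.End A (MvPolynomial σ A) :=
  LinearMap.mulLeft A (X s) ∘ₗ (pderiv t).toLinearMap

lemma mulXPderiv_apply (s t : σ) (p : MvPolynomial σ A) :
    mulXPderiv s t p = X s * pderiv t p := rfl

lemma mulXPderiv_commute {s t s' t' : σ} (h : t ≠ s') (h' : t' ≠ s) :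
    Commute (mulXPderiv s t : Module.End A (MvPolynomial σ A)) (mulXPderiv s' t') := by
  classical
  refine LinearMap.ext fun p => ?_
  simp only [Module.End.mul_apply, mulXPderiv_apply, Derivation.leibniz, pderiv_X,
    Pi.single_eq_of_ne h.symm, Pi.single_eq_of_ne h'.symm, smul_eq_mul, mul_zero, add_zero,
    pderiv_pderiv_comm t t' p]
  ring

lemma mulXPderiv_pow_monomial {s t : σ} (hst : s ≠ t) (k : ℕ) (m : σ →₀ ℕ) (a : A) :
    (mulXPderiv s t ^ k) (monomial m a) =
      monomial (m + k • Finsupp.single s 1 - k • Finsupp.single t 1)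
        (a * (m t).descFactorial k) := by
  classical
  induction k with
  | zero => simp
  | succ k ih =>
    rw [pow_succ', Module.End.mul_apply, ih, mulXPderiv_apply, pderiv_monomial, X, monomial_mul,
      one_mul, Nat.descFactorial_succ]
    congr 1
    · congr 1
      ext l
      simp only [Finsupp.coe_add, Finsupp.coe_tsub, Pi.add_apply, Pi.sub_apply,
        Finsupp.smul_apply, Finsupp.single_apply, smul_eq_mul]
      split_ifs <;> simp_all <;> omega
    · simp only [Finsupp.coe_add, Finsupp.coe_tsub, Pi.add_apply, Pi.sub_apply,
        Finsupp.smul_apply, Finsupp.single_apply, smul_eq_mul, if_neg hst, if_true, mul_zero,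
        add_zero, mul_one]
      push_cast
      ring

lemma pderiv_pow_monomial (t : σ) (k : ℕ) (m : σ →₀ ℕ) (a : A) :
    ((pderiv t).toLinearMap ^ k) (monomial m a) =
      monomial (m - k • Finsupp.single t 1) (a * (m t).descFactorial k) := by
  classical
  induction k with
  | zero => simp
  | succ k ih =>
    rw [pow_succ', Module.End.mul_apply, ih, Derivation.coeFn_coe, pderiv_monomial,
      Nat.descFactorial_succ]
    congr 1
    · congr 1
      ext l
      simp only [Finsupp.coe_tsub, Pi.sub_apply, Finsupp.smul_apply, Finsupp.single_apply,
        smul_eq_mul]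
      split_ifs <;> omega
    · simp only [Finsupp.coe_tsub, Pi.sub_apply, Finsupp.smul_apply, Finsupp.single_apply,
        smul_eq_mul, if_true, mul_one]
      push_cast
      ring

lemma mulXPderiv_sub_pow_monomial {s t s' t' : σ} (hst : s ≠ t) (hst' : s' ≠ t')
    (hts' : t ≠ s') (hts : t' ≠ s) (htt' : t ≠ t') (c : ℕ) (m : σ →₀ ℕ) (a : A) :
    ((mulXPderiv s t - mulXPderiv s' t' : Module.End A (MvPolynomial σ A)) ^ c) (monomial m a) =
      ∑ k ∈ range (c + 1),
        monomial (m + k • Finsupp.single s 1 + (c - k) • Finsupp.single s' 1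
            - k • Finsupp.single t 1 - (c - k) • Finsupp.single t' 1)
          ((-1) ^ (c - k) * c.choose k * (m t).descFactorial k * (m t').descFactorial (c - k) *
            a) := by
  classical
  rw [(mulXPderiv_commute hts' hts).sub_pow_apply]
  refine sum_congr rfl fun k _ => ?_
  rw [mulXPderiv_pow_monomial hst', mulXPderiv_pow_monomial hst, smul_monomial]
  congr 1
  · congr 1
    ext l
    simp only [Finsupp.coe_add, Finsupp.coe_tsub, Pi.add_apply, Pi.sub_apply,
      Finsupp.smul_apply, Finsupp.single_apply, smul_eq_mul]
    split_ifs <;> first | omega | simp_all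
  · simp only [Finsupp.coe_add, Finsupp.coe_tsub, Pi.add_apply, Pi.sub_apply,
      Finsupp.smul_apply, Finsupp.single_apply, smul_eq_mul, if_neg hts'.symm, if_neg htt'.symm,
      mul_zero, tsub_zero, add_zero]
    ring

end MulXPderiv

noncomputable section SixVariables

variable {A : Type*} [CommRing A]

variable (A) in
def D1ₗ : Module.End A (Poly6 A) := mulXPderiv 4 2 - mulXPderiv 5 1
variable (A) in
def D2ₗ : Module.End A (Poly6 A) := mulXPderiv 5 0 - mulXPderiv 3 2
variable (A) in
def D3ₗ : Module.End A (Poly6 A) := mulXPderiv 3 1 - mulXPderiv 4 0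

lemma coe_D1ₗ : ⇑(D1ₗ A) = D1 := rfl
lemma coe_D2ₗ : ⇑(D2ₗ A) = D2 := rfl
lemma coe_D3ₗ : ⇑(D3ₗ A) = D3 := rfl

-- the exponent vector of `x^a y^b z^c u^d v^e w^f`
def multiIdx (a b c d e f : ℕ) : Fin 6 →₀ ℕ := Finsupp.equivFunOnFinite.symm ![a, b, c, d, e, f]

@[simp]
lemma multiIdx_apply (a b c d e f : ℕ) (i : Fin 6) :
    multiIdx a b c d e f i = ![a, b, c, d, e, f] i := rfl

lemma Jn_eq_evalOp (p q : Poly6 A) :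
    Jn p q = evalOp (fun m => D1ₗ A ^ m 0 * D2ₗ A ^ m 1 * D3ₗ A ^ m 2) p q := by
  refine sum_congr rfl fun m _ => ?_
  rw [C_mul', ← coe_D1ₗ, ← coe_D2ₗ, ← coe_D3ₗ]
  simp only [Module.End.coe_pow, Module.End.mul_apply]

lemma polarPair_eq_evalOp (p q : Poly6 A) :
    polarPair p q = constantCoeff (evalOp (fun m => (pderiv 0).toLinearMap ^ m 3 *
      (pderiv 1).toLinearMap ^ m 4 * (pderiv 2).toLinearMap ^ m 5) p q) := by
  refine congrArg _ (sum_congr rfl fun m _ => ?_)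
  rw [C_mul']
  simp only [Module.End.coe_pow, Module.End.mul_apply]
  rfl

lemma polarPair_sum_left {ι : Type*} (s : Finset ι) (f : ι → Poly6 A) (q : Poly6 A) :
    polarPair (∑ i ∈ s, f i) q = ∑ i ∈ s, polarPair (f i) q := by
  simp only [polarPair_eq_evalOp, evalOp_sum_left, map_sum]

lemma tn_sum_left {ι : Type*} (s : Finset ι) (f : ι → Poly6 A) (q₂ q₃ : Poly6 A) :
    tn (∑ i ∈ s, f i) q₂ q₃ = ∑ i ∈ s, tn (f i) q₂ q₃ := by
  simp only [tn, Jn_eq_evalOp, evalOp_sum_left, polarPair_sum_left]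

lemma tn_sum_middle {ι : Type*} (s : Finset ι) (q₁ : Poly6 A) (f : ι → Poly6 A) (q₃ : Poly6 A) :
    tn q₁ (∑ i ∈ s, f i) q₃ = ∑ i ∈ s, tn q₁ (f i) q₃ := by
  simp only [tn, Jn_eq_evalOp, evalOp_sum_right, polarPair_sum_left]

lemma tn_sum_right {ι : Type*} (s : Finset ι) (q₁ q₂ : Poly6 A) (f : ι → Poly6 A) :
    tn q₁ q₂ (∑ i ∈ s, f i) = ∑ i ∈ s, tn q₁ q₂ (f i) := by
  simp only [tn, polarPair_eq_evalOp, evalOp_sum_right, map_sum]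

lemma tn_eq_sum_monomial (q₁ q₂ q₃ : Poly6 A) :
    tn q₁ q₂ q₃ = ∑ m₁ ∈ q₁.support, ∑ m₂ ∈ q₂.support, ∑ m₃ ∈ q₃.support,
      tn (monomial m₁ (coeff m₁ q₁)) (monomial m₂ (coeff m₂ q₂)) (monomial m₃ (coeff m₃ q₃)) := by
  conv_lhs => rw [q₁.as_sum, q₂.as_sum, q₃.as_sum]
  simp_rw [tn_sum_left, tn_sum_middle, tn_sum_right]

lemma eq_multiIdx_of_mem_support {n : ℕ} {q : Poly6 A} (hq : q.IsHomogeneous n)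
    (hxyz : OnlyXYZ q) {m : Fin 6 →₀ ℕ} (hm : m ∈ q.support) :
    m = multiIdx (m 0) (m 1) (m 2) 0 0 0 ∧ m 0 + m 1 + m 2 = n := by
  obtain ⟨h₃, h₄, h₅⟩ := hxyz m hm
  refine ⟨?_, ?_⟩
  · ext l
    fin_cases l <;> simp [h₃, h₄, h₅]
  · have hn := hq.degree_eq_sum_deg_support hm
    rw [← Finsupp.degree_apply, Finsupp.degree_eq_sum, Fin.sum_univ_six, h₃, h₄, h₅] at hn
    omega

lemma Jn_monomial (a b c a' b' c' : ℕ) (r r' : A) :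
    Jn (monomial (multiIdx a b c 0 0 0) r) (monomial (multiIdx a' b' c' 0 0 0) r') =
      ∑ k ∈ range (c + 1), ∑ j ∈ range (b + 1), ∑ i ∈ range (a + 1),
        monomial (multiIdx (a' - (c - k + j)) (b' - (k + (a - i))) (c' - (b - j + i))
            (k + (b - j)) (c - k + i) (j + (a - i)))
          ((-1) ^ (a - i + (b - j) + (c - k)) *
            (a.choose i * b.choose j * c.choose k * a'.descFactorial (c - k + j) *
              b'.descFactorial (k + (a - i)) * c'.descFactorial (b - j + i) : ℕ) * (r * r')) := by
  rw [Jn_eq_evalOp, evalOp_monomial]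
  simp only [multiIdx_apply, Matrix.cons_val, Module.End.mul_apply, D1ₗ, D2ₗ, D3ₗ]
  rw [mulXPderiv_sub_pow_monomial (by decide) (by decide) (by decide) (by decide) (by decide),
    map_sum, map_sum, smul_sum]
  refine sum_congr rfl fun k _ => ?_
  rw [mulXPderiv_sub_pow_monomial (by decide) (by decide) (by decide) (by decide) (by decide),
    map_sum, smul_sum]
  refine sum_congr rfl fun j _ => ?_
  rw [mulXPderiv_sub_pow_monomial (by decide) (by decide) (by decide) (by decide) (by decide),
    smul_sum]
  refine sum_congr rfl fun i _ => ?_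
  rw [smul_monomial]
  congr 1
  · congr 1
    ext l
    fin_cases l <;> simp <;> omega
  · simp only [Nat.descFactorial_add_eq_mul, Finsupp.coe_add, Finsupp.coe_tsub, Finsupp.coe_smul,
      Pi.add_apply, Pi.sub_apply, Pi.smul_apply, Finsupp.single_apply, smul_eq_mul, multiIdx_apply,
      Matrix.cons_val, Fin.reduceEq, ↓reduceIte, mul_zero, mul_one, add_zero, tsub_zero,
      Nat.cast_mul]
    ring

lemma polarPair_monomial (M : Fin 6 →₀ ℕ) (a b c : ℕ) (r r' : A) :
    polarPair (monomial M r) (monomial (multiIdx a b c 0 0 0) r') =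
      r * r' * if M 3 = a ∧ M 4 = b ∧ M 5 = c then ((a ! * b ! * c ! : ℕ) : A) else 0 := by
  rw [polarPair_eq_evalOp, evalOp_monomial]
  simp only [Module.End.mul_apply, pderiv_pow_monomial, smul_monomial, constantCoeff_monomial]
  have hidx : (multiIdx a b c 0 0 0 - M 5 • Finsupp.single 2 1 - M 4 • Finsupp.single 1 1
      - M 3 • Finsupp.single 0 1 = 0) ↔ a ≤ M 3 ∧ b ≤ M 4 ∧ c ≤ M 5 := by
    simp [Finsupp.ext_iff, Fin.forall_fin_succ]
    omega
  simp only [hidx, Finsupp.coe_tsub, Finsupp.coe_smul, Pi.sub_apply, Pi.smul_apply,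
    Finsupp.single_apply, smul_eq_mul, multiIdx_apply, Matrix.cons_val, Fin.reduceEq, ↓reduceIte,
    mul_zero, tsub_zero, Nat.cast_mul, mul_ite]
  split_ifs with hle heq heq
  · obtain ⟨ha, hb, hc⟩ := heq
    rw [ha, hb, hc, Nat.descFactorial_self, Nat.descFactorial_self, Nat.descFactorial_self]
    ring
  · have hlt : a < M 3 ∨ b < M 4 ∨ c < M 5 := by omega
    rcases hlt with h | h | h <;> simp [Nat.descFactorial_eq_zero_iff_lt.mpr h]
  · omega
  · rfl

end SixVariables

-- `i`, `j`, `k` count the factors `v∂z` of `D1^a`, `w∂x` of `D2^b` and `u∂y` of `D3^c`.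
def tnTerm (a b c a' b' c' a'' b'' c'' i j k : ℕ) : ℤ :=
  if k + (b - j) = a'' ∧ c - k + i = b'' ∧ j + (a - i) = c'' then
    (-1) ^ (a - i + (b - j) + (c - k)) *
      (a.choose i * b.choose j * c.choose k * a'.descFactorial (c - k + j) *
        b'.descFactorial (k + (a - i)) * c'.descFactorial (b - j + i) * (a'' ! * b'' ! * c'' !) : ℕ)
  else 0

def tnCoeff (a b c a' b' c' a'' b'' c'' : ℕ) : ℤ :=
  ∑ x ∈ range (a + 1) ×ˢ range (b + 1) ×ˢ range (c + 1),
    tnTerm a b c a' b' c' a'' b'' c'' x.1 x.2.1 x.2.2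

section Coefficients

variable {a b c a' b' c' a'' b'' c'' : ℕ}

lemma tnTerm_eq_ite (h : a + b + c = a' + b' + c') {i j k : ℕ} (hi : i ≤ a) (hj : j ≤ b)
    (hk : k ≤ c) :
    tnTerm a b c a' b' c' a'' b'' c'' i j k =
      if k + (b - j) = a'' ∧ c - k + i = b'' ∧ j + (a - i) = c'' ∧
          c - k + j = a' ∧ k + (a - i) = b' ∧ b - j + i = c' then
        (-1 : ℤ) ^ (a - i + (b - j) + (c - k)) *
          (a.choose i * b.choose j * c.choose k * (a' ! * b' ! * c' !) *
            (a'' ! * b'' ! * c'' !) : ℕ)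
      else 0 := by
  unfold tnTerm
  split_ifs with hdual hall hall
  · obtain ⟨-, -, -, ha', hb', hc'⟩ := hall
    subst ha' hb' hc'
    simp only [Nat.descFactorial_self, mul_assoc]
  · have hlt : a' < c - k + j ∨ b' < k + (a - i) ∨ c' < b - j + i := by omega
    rcases hlt with hlt | hlt | hlt <;> simp [Nat.descFactorial_eq_zero_iff_lt.mpr hlt]
  · exact absurd ⟨hall.1, hall.2.1, hall.2.2.1⟩ hdual
  · rfl

lemma tnTerm_swap₂₃ {n : ℕ} (h : a + b + c = n) (h' : a' + b' + c' = n)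
    (h'' : a'' + b'' + c'' = n) {i j k : ℕ} (hi : i ≤ a) (hj : j ≤ b) (hk : k ≤ c) :
    tnTerm a b c a'' b'' c'' a' b' c' i j k =
      (-1) ^ n * tnTerm a b c a' b' c' a'' b'' c'' (a - i) (b - j) (c - k) := by
  rw [tnTerm_eq_ite (show a + b + c = a'' + b'' + c'' by omega) hi hj hk,
    tnTerm_eq_ite (show a + b + c = a' + b' + c' by omega) (a.sub_le i) (b.sub_le j) (c.sub_le k),
    Nat.sub_sub_self hi, Nat.sub_sub_self hj, Nat.sub_sub_self hk, Nat.choose_symm hi,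
    Nat.choose_symm hj, Nat.choose_symm hk]
  by_cases hm : k + (b - j) = a' ∧ c - k + i = b' ∧ j + (a - i) = c' ∧
      c - k + j = a'' ∧ k + (a - i) = b'' ∧ b - j + i = c''
  · rw [if_pos hm, if_pos (by omega),
      neg_one_pow_eq_pow_mul_pow_of_add_eq (show _ + (i + j + k) = n by omega)]
    push_cast
    ring
  · rw [if_neg hm, if_neg (by omega), mul_zero]

lemma tnCoeff_swap₂₃ {n : ℕ} (h : a + b + c = n) (h' : a' + b' + c' = n)
    (h'' : a'' + b'' + c'' = n) :
    tnCoeff a b c a'' b'' c'' a' b' c' = (-1) ^ n * tnCoeff a b c a' b' c' a'' b'' c'' := by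
  rw [tnCoeff, tnCoeff, mul_sum]
  refine sum_nbij' (fun x => (a - x.1, b - x.2.1, c - x.2.2))
    (fun x => (a - x.1, b - x.2.1, c - x.2.2)) ?_ ?_ ?_ ?_ ?_
  all_goals
    rintro ⟨i, j, k⟩ hx
    simp only [mem_product, mem_range] at hx
  · simp only [mem_product, mem_range]; omega
  · simp only [mem_product, mem_range]; omega
  · simp only [Prod.mk.injEq]; omega
  · simp only [Prod.mk.injEq]; omega
  · exact tnTerm_swap₂₃ h h' h'' (i := i) (j := j) (k := k) (by omega) (by omega) (by omega)

lemma tnTerm_swap₁₂ {n : ℕ} (h : a + b + c = n) (h'' : a'' + b'' + c'' = n) {i j k : ℕ}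
    (hi : i ≤ a) (hj : j ≤ b) (hk : k ≤ c)
    (hm : k + (b - j) = a'' ∧ c - k + i = b'' ∧ j + (a - i) = c'' ∧
      c - k + j = a' ∧ k + (a - i) = b' ∧ b - j + i = c') :
    tnTerm a' b' c' a b c a'' b'' c'' (c - k) (a - i) (b - j) =
      (-1) ^ n * tnTerm a b c a' b' c' a'' b'' c'' i j k := by
  obtain ⟨u₂, rfl⟩ := Nat.exists_eq_add_of_le hi
  obtain ⟨u₄, rfl⟩ := Nat.exists_eq_add_of_le hj
  obtain ⟨u₆, rfl⟩ := Nat.exists_eq_add_of_le hk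
  simp only [Nat.add_sub_cancel_left] at hm ⊢
  obtain ⟨rfl, rfl, rfl, rfl, rfl, rfl⟩ := hm
  rw [tnTerm_eq_ite (by omega) (by omega) (by omega) (by omega), if_pos (by omega),
    tnTerm_eq_ite (by omega) (by omega) (by omega) (by omega), if_pos (by omega)]
  simp only [Nat.add_sub_cancel_left, Nat.add_sub_cancel]
  have hreg := congrArg (Nat.cast : ℕ → ℤ) (Nat.choose_mul_factorial_regroup i u₂ j u₄ k u₆)
  push_cast at hreg ⊢
  rw [neg_one_pow_eq_pow_mul_pow_of_add_eq (show _ + (u₂ + u₄ + u₆) = n by omega)]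
  rw [hreg]
  ring

lemma match_of_tnTerm_ne_zero (h : a + b + c = a' + b' + c') {i j k : ℕ} (hi : i ≤ a)
    (hj : j ≤ b) (hk : k ≤ c) (hne : tnTerm a b c a' b' c' a'' b'' c'' i j k ≠ 0) :
    k + (b - j) = a'' ∧ c - k + i = b'' ∧ j + (a - i) = c'' ∧
      c - k + j = a' ∧ k + (a - i) = b' ∧ b - j + i = c' := by
  by_contra hm
  exact hne (by rw [tnTerm_eq_ite h hi hj hk, if_neg hm])

lemma tnCoeff_swap₁₂ {n : ℕ} (h : a + b + c = n) (h' : a' + b' + c' = n)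
    (h'' : a'' + b'' + c'' = n) :
    tnCoeff a' b' c' a b c a'' b'' c'' = (-1) ^ n * tnCoeff a b c a' b' c' a'' b'' c'' := by
  rw [tnCoeff, tnCoeff,
    ← sum_filter_ne_zero (s := range (a' + 1) ×ˢ range (b' + 1) ×ˢ range (c' + 1)),
    ← sum_filter_ne_zero (s := range (a + 1) ×ˢ range (b + 1) ×ˢ range (c + 1)), mul_sum]
  symm
  refine sum_nbij' (fun x => (c - x.2.2, a - x.1, b - x.2.1))
    (fun x => (c' - x.2.2, a' - x.1, b' - x.2.1)) ?_ ?_ ?_ ?_ ?_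
  all_goals
    rintro ⟨i, j, k⟩ hx
    simp only [mem_filter, mem_product, mem_range, and_assoc] at hx
    obtain ⟨hi, hj, hk, hne⟩ := hx
    have hm := match_of_tnTerm_ne_zero (by omega) (by omega) (by omega) (by omega) hne
  · simp only [mem_filter, mem_product, mem_range]
    refine ⟨by omega, ?_⟩
    rw [tnTerm_swap₁₂ h h'' (by omega) (by omega) (by omega) hm]
    exact mul_ne_zero (pow_ne_zero _ (by norm_num)) hne
  · simp only [mem_filter, mem_product, mem_range]
    refine ⟨by omega, ?_⟩
    rw [tnTerm_swap₁₂ h' h'' (by omega) (by omega) (by omega) hm]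
    exact mul_ne_zero (pow_ne_zero _ (by norm_num)) hne
  · simp only [Prod.mk.injEq]; omega
  · simp only [Prod.mk.injEq]; omega
  · exact (tnTerm_swap₁₂ h h'' (by omega) (by omega) (by omega) hm).symm

end Coefficients

section TrilinearForm

variable {A : Type*} [CommRing A]

lemma tn_monomial (a b c a' b' c' a'' b'' c'' : ℕ) (r r' r'' : A) :
    tn (monomial (multiIdx a b c 0 0 0) r) (monomial (multiIdx a' b' c' 0 0 0) r')
        (monomial (multiIdx a'' b'' c'' 0 0 0) r'') =
      r * r' * r'' * (tnCoeff a b c a' b' c' a'' b'' c'' : A) := by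
  simp only [tn, Jn_monomial, polarPair_sum_left, polarPair_monomial, tnCoeff, sum_product_right,
    Int.cast_sum, mul_sum]
  refine sum_congr rfl fun k _ => sum_congr rfl fun j _ => sum_congr rfl fun i _ => ?_
  simp only [multiIdx_apply, Matrix.cons_val, tnTerm]
  by_cases h : k + (b - j) = a'' ∧ c - k + i = b'' ∧ j + (a - i) = c''
  · simp only [h, and_self, if_true]
    push_cast
    ring
  · simp only [h, if_false, Int.cast_zero, mul_zero]

variable {n : ℕ} {q₁ q₂ q₃ : Poly6 A}

lemma tn_swap₁₂ (h₁ : q₁.IsHomogeneous n) (h₂ : q₂.IsHomogeneous n) (h₃ : q₃.IsHomogeneous n)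
    (x₁ : OnlyXYZ q₁) (x₂ : OnlyXYZ q₂) (x₃ : OnlyXYZ q₃) :
    tn q₂ q₁ q₃ = (-1) ^ n * tn q₁ q₂ q₃ := by
  rw [tn_eq_sum_monomial, tn_eq_sum_monomial, sum_comm]
  simp only [mul_sum]
  refine sum_congr rfl fun m₁ hm₁ => sum_congr rfl fun m₂ hm₂ => sum_congr rfl fun m₃ hm₃ => ?_
  obtain ⟨e₁, d₁⟩ := eq_multiIdx_of_mem_support h₁ x₁ hm₁
  obtain ⟨e₂, d₂⟩ := eq_multiIdx_of_mem_support h₂ x₂ hm₂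
  obtain ⟨e₃, d₃⟩ := eq_multiIdx_of_mem_support h₃ x₃ hm₃
  rw [e₁, e₂, e₃, tn_monomial, tn_monomial, tnCoeff_swap₁₂ d₁ d₂ d₃]
  push_cast
  ring

lemma tn_swap₂₃ (h₁ : q₁.IsHomogeneous n) (h₂ : q₂.IsHomogeneous n) (h₃ : q₃.IsHomogeneous n)
    (x₁ : OnlyXYZ q₁) (x₂ : OnlyXYZ q₂) (x₃ : OnlyXYZ q₃) :
    tn q₁ q₃ q₂ = (-1) ^ n * tn q₁ q₂ q₃ := by
  rw [tn_eq_sum_monomial, tn_eq_sum_monomial]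
  simp only [mul_sum]
  refine sum_congr rfl fun m₁ hm₁ => ?_
  rw [sum_comm]
  refine sum_congr rfl fun m₂ hm₂ => sum_congr rfl fun m₃ hm₃ => ?_
  obtain ⟨e₁, d₁⟩ := eq_multiIdx_of_mem_support h₁ x₁ hm₁
  obtain ⟨e₂, d₂⟩ := eq_multiIdx_of_mem_support h₂ x₂ hm₂
  obtain ⟨e₃, d₃⟩ := eq_multiIdx_of_mem_support h₃ x₃ hm₃
  rw [e₁, e₂, e₃, tn_monomial, tn_monomial, tnCoeff_swap₂₃ d₁ d₂ d₃]
  push_cast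
  ring

end TrilinearForm

/-- For every permutation `σ ∈ 𝔖₃` and ternary forms `q1, q2, q3` of degree `n` in
`x, y, z` over `ℤ`, `t_n(q_{σ(1)}, q_{σ(2)}, q_{σ(3)}) = (sign σ)^n · t_n(q1, q2, q3)`. -/
theorem statement6 (n : ℕ) (σ : Equiv.Perm (Fin 3)) (q : Fin 3 → Poly6 ℤ)
    (hhom : ∀ i, (q i).IsHomogeneous n) (hxyz : ∀ i, OnlyXYZ (q i)) :
    tn (q (σ 0)) (q (σ 1)) (q (σ 2)) =
      ((Equiv.Perm.sign σ : ℤ)) ^ n * tn (q 0) (q 1) (q 2) := by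
  refine (Equiv.Perm.eq_sign_pow_mul_of_mul_swap n (fun τ => tn (q (τ 0)) (q (τ 1)) (q (τ 2)))
    (fun τ i => ?_) σ).trans (by simp)
  fin_cases i
  · exact tn_swap₁₂ (hhom _) (hhom _) (hhom _) (hxyz _) (hxyz _) (hxyz _)
  · exact tn_swap₂₃ (hhom _) (hhom _) (hhom _) (hxyz _) (hxyz _) (hxyz _)
end

section
/- For every traceless derivation g ∈ sl_3 (acting on ternary forms of degree n by the corresponding vector field, e.g. x∂y, y∂z, x∂x − y∂y, etc.) and every form q of degree n, the identity ⟨h_n(q), g·q⟩ = 0 holds, where h_n(q) = J_n(q,q). -/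
open MvPolynomial

/-- The action on ternary forms in `x, y, z` of the derivation (vector field)
`∑ g_{ij} x_i ∂_{x_j}` associated to a `3×3` matrix `g`. -/
noncomputable def slAction (g : Matrix (Fin 3) (Fin 3) ℤ) (q : Poly6 ℤ) : Poly6 ℤ :=
  ∑ i : Fin 3, ∑ j : Fin 3,
    MvPolynomial.C (g i j) * (X (Fin.castLE (by omega) i) *
      pderiv (Fin.castLE (by omega) j) q)


namespace MvPolynomial

variable {σ R : Type*} [CommSemiring R]

theorem pderiv_comm (i j : σ) (p : MvPolynomial σ R) :
    pderiv i (pderiv j p) = pderiv j (pderiv i p) := by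
  classical
  induction p using MvPolynomial.induction_on with
  | C a => simp
  | add p q hp hq => simp only [map_add, hp, hq]
  | mul_X p k hp =>
    simp only [pderiv_mul, map_add, pderiv_X, hp, Pi.single_apply, apply_ite, pderiv_one,
      map_zero]
    split <;> split <;> ring

theorem commute_pderiv (i j : σ) : Function.Commute (pderiv (R := R) i) (pderiv j) :=
  pderiv_comm i j

theorem sum_support_C_mul_add (F : (σ →₀ ℕ) → MvPolynomial σ R) (p q : MvPolynomial σ R) :
    ∑ m ∈ (p + q).support, C ((p + q).coeff m) * F m =
      ∑ m ∈ p.support, C (p.coeff m) * F m + ∑ m ∈ q.support, C (q.coeff m) * F m := by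
  simp only [← sum_def (b := fun m c => C c * F m)]
  exact Finsupp.sum_add_index' (by simp) (by simp [add_mul])

theorem sum_support_C_mul_monomial (F : (σ →₀ ℕ) → MvPolynomial σ R) (m₀ : σ →₀ ℕ) (c : R) :
    ∑ m ∈ (monomial m₀ c).support, C ((monomial m₀ c).coeff m) * F m = C c * F m₀ := by
  rw [← sum_def (b := fun m c => C c * F m), sum_monomial_eq (by simp)]

end MvPolynomial

theorem Fin.sum_cyclic_swap {M : Type*} [AddCommGroup M] (f : Fin 3 → Fin 3 → Fin 3 → M) :
    ∑ k, (f (k + 2) k (k + 1) - f (k + 1) k (k + 2)) =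
      -∑ k, (f (k + 2) (k + 1) k - f (k + 1) (k + 2) k) := by
  simp [Fin.sum_univ_three]
  abel

theorem Matrix.sum_mul_cyclic_sub {R : Type*} [CommRing R] (g : Matrix (Fin 3) (Fin 3) R)
    (τ : Fin 3 → Fin 3 → Fin 3 → R) (ε : R) (hε : ε * ε = 1)
    (h₁ : ∀ i j k, τ i j k = ε * τ j i k) (h₂ : ∀ i j k, τ i j k = ε * τ i k j) :
    ∑ i, ∑ j, g i j * (τ (i + 2) (i + 1) j - τ (i + 1) (i + 2) j) =
      (ε - 1) * τ 0 1 2 * g.trace := by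
  have cyc : ∀ i j k, τ i j k = τ j k i := fun i j k => by
    linear_combination h₁ i j k + ε * h₂ j i k + τ j k i * hε
  have rep : ∀ i j, (ε - 1) * τ i j j = 0 := fun i j => by linear_combination -h₂ i j j
  have diff : ∀ i j, τ (i + 2) (i + 1) j - τ (i + 1) (i + 2) j = (ε - 1) * τ (i + 1) (i + 2) j :=
    fun i j => by linear_combination h₁ (i + 2) (i + 1) j
  -- Off the diagonal `τ` has a repeated index, which `ε - 1` kills; on the diagonal it is a
  -- cyclic rotation of `τ 0 1 2`.
  simp only [diff, Fin.sum_univ_three, Matrix.trace_fin_three, Fin.isValue, Fin.reduceAdd,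
    zero_add]
  linear_combination g 0 0 * (ε - 1) * (cyc 1 2 0 + cyc 2 0 1)
    + g 0 1 * ((ε - 1) * cyc 1 2 1 + rep 2 1) + g 0 2 * rep 1 2 + g 1 0 * rep 2 0
    + g 1 1 * (ε - 1) * cyc 2 0 1 + g 1 2 * ((ε - 1) * cyc 2 0 2 + rep 0 2)
    + g 2 0 * ((ε - 1) * cyc 0 1 0 + rep 1 0) + g 2 1 * rep 0 1

abbrev xIdx (i : Fin 3) : Fin 6 := Fin.castLE (by omega) i

abbrev uIdx (i : Fin 3) : Fin 6 := Fin.natAdd 3 i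

@[simp] theorem xIdx_zero : xIdx 0 = 0 := rfl
@[simp] theorem xIdx_one : xIdx 1 = 1 := rfl
@[simp] theorem xIdx_two : xIdx 2 = 2 := rfl

noncomputable section

variable {A : Type*} [CommRing A]

/-- `Jn` ignores the variables `u, v, w` of its first argument, hence the identities. -/
def substOp (i : Fin 6) : Module.End A (Poly6 A) where
  toFun := ![D1, D2, D3, id, id, id] i
  map_add' p q := by fin_cases i <;> simp [D1, D2, D3] <;> ring
  map_smul' c p := by fin_cases i <;> simp [D1, D2, D3, smul_sub]

theorem D1_comm_D2 : Function.Commute (D1 (A := A)) D2 := fun p => by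
  simp [D1, D2, pderiv_X, pderiv_comm (R := A)]
  ring

theorem D1_comm_D3 : Function.Commute (D1 (A := A)) D3 := fun p => by
  simp [D1, D3, pderiv_X, pderiv_comm (R := A)]
  ring

theorem D2_comm_D3 : Function.Commute (D2 (A := A)) D3 := fun p => by
  simp [D2, D3, pderiv_X, pderiv_comm (R := A)]
  ring

theorem substOp_C_mul (i : Fin 6) (c : A) (p : Poly6 A) :
    substOp i (C c * p) = C c * substOp i p := by
  rw [C_mul', C_mul', map_smul]

theorem Jn_add_left (a a' b : Poly6 A) : Jn (a + a') b = Jn a b + Jn a' b :=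
  sum_support_C_mul_add _ a a'

theorem Jn_monomial_s10 (m : Fin 6 →₀ ℕ) (c : A) (b : Poly6 A) :
    Jn (monomial m c) b = C c * D1^[m 0] (D2^[m 1] (D3^[m 2] b)) :=
  sum_support_C_mul_monomial _ m c

theorem Jn_C (c : A) (b : Poly6 A) : Jn (C c) b = C c * b :=
  Jn_monomial_s10 0 c b

theorem Jn_zero_left (b : Poly6 A) : Jn 0 b = 0 := by
  simp [Jn]

theorem Jn_mul_X (a b : Poly6 A) (i : Fin 6) : Jn (a * X i) b = substOp i (Jn a b) := by
  induction a using MvPolynomial.induction_on' with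
  | monomial m c =>
    rw [X, monomial_mul, mul_one, Jn_monomial_s10, Jn_monomial_s10, substOp_C_mul]
    congr 1
    fin_cases i <;> simp [substOp]
    · exact Function.Commute.iterate_self D1 _ _
    · rw [Function.Commute.iterate_self D2 _ _, D1_comm_D2.iterate_left _ _]
    · rw [Function.Commute.iterate_self D3 _ _, D2_comm_D3.iterate_left _ _,
        D1_comm_D3.iterate_left _ _]
  | add p q hp hq => rw [add_mul, Jn_add_left, Jn_add_left, hp, hq, map_add]

theorem Jn_zero_right (a : Poly6 A) : Jn a 0 = 0 := by
  induction a using MvPolynomial.induction_on with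
  | C c => rw [Jn_C, mul_zero]
  | add p q hp hq => rw [Jn_add_left, hp, hq, add_zero]
  | mul_X p i hp => rw [Jn_mul_X, hp, map_zero]

/-- `polarPair` ignores the variables `x, y, z` of its first argument and reads `u, v, w` as
`∂x, ∂y, ∂z`. -/
def dualOp (i : Fin 6) : Module.End A (Poly6 A) :=
  ![1, 1, 1, (pderiv 0).toLinearMap, (pderiv 1).toLinearMap, (pderiv 2).toLinearMap] i

theorem polarPair_add_left (p p' r : Poly6 A) :
    polarPair (p + p') r = polarPair p r + polarPair p' r := by
  rw [polarPair, polarPair, polarPair, sum_support_C_mul_add, map_add]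

theorem polarPair_sub_left (p p' r : Poly6 A) :
    polarPair (p - p') r = polarPair p r - polarPair p' r :=
  eq_sub_of_add_eq (by rw [← polarPair_add_left, sub_add_cancel])

theorem polarPair_monomial_s10 (m : Fin 6 →₀ ℕ) (c : A) (r : Poly6 A) :
    polarPair (monomial m c) r =
      c * constantCoeff ((pderiv 0)^[m 3] ((pderiv 1)^[m 4] ((pderiv 2)^[m 5] r))) := by
  rw [polarPair, sum_support_C_mul_monomial, map_mul, constantCoeff_C]

theorem polarPair_C (c : A) (r : Poly6 A) : polarPair (C c) r = c * constantCoeff r :=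
  polarPair_monomial_s10 0 c r

theorem polarPair_zero_left (r : Poly6 A) : polarPair 0 r = 0 := by
  simp [polarPair]

theorem polarPair_mul_X (p r : Poly6 A) (i : Fin 6) :
    polarPair (p * X i) r = polarPair p (dualOp i r) := by
  induction p using MvPolynomial.induction_on' with
  | monomial m c =>
    rw [X, monomial_mul, mul_one, polarPair_monomial_s10, polarPair_monomial_s10]
    fin_cases i <;> simp [dualOp]
    · rw [(commute_pderiv 0 1).iterate_right, (commute_pderiv 0 2).iterate_right]
    · rw [(commute_pderiv 1 2).iterate_right]
  | add p q hp hq => rw [add_mul, polarPair_add_left, polarPair_add_left, hp, hq]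

theorem polarPair_add_right (p r r' : Poly6 A) :
    polarPair p (r + r') = polarPair p r + polarPair p r' := by
  induction p using MvPolynomial.induction_on generalizing r r' with
  | C c => simp only [polarPair_C, map_add, mul_add]
  | add p q hp hq => simp only [polarPair_add_left, hp, hq]; ring
  | mul_X p i hp => simp only [polarPair_mul_X, map_add, hp]

theorem polarPair_smul_right (p : Poly6 A) (s : A) (r : Poly6 A) :
    polarPair p (s • r) = s * polarPair p r := by
  induction p using MvPolynomial.induction_on generalizing r with
  | C c => simp only [polarPair_C, ← C_mul', map_mul, constantCoeff_C]; ring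
  | add p q hp hq => simp only [polarPair_add_left, hp, hq]; ring
  | mul_X p i hp => simp only [polarPair_mul_X, map_smul, hp]

theorem polarPair_zero_right (p : Poly6 A) : polarPair p 0 = 0 := by
  simpa using polarPair_smul_right p 0 0

theorem polarPair_nsmul_right (p : Poly6 A) (n : ℕ) (r : Poly6 A) :
    polarPair p (n • r) = n • polarPair p r := by
  rw [← Nat.cast_smul_eq_nsmul A, polarPair_smul_right, nsmul_eq_mul]

theorem polarPair_sum_right {ι : Type*} (p : Poly6 A) (s : Finset ι) (f : ι → Poly6 A) :
    polarPair p (∑ i ∈ s, f i) = ∑ i ∈ s, polarPair p (f i) :=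
  map_sum (AddMonoidHom.mk' (polarPair p) (polarPair_add_right p)) f s

theorem dualOp_X_mul (j : Fin 6) (i : Fin 3) (t : Poly6 A) :
    dualOp j (X (xIdx i) * t) = X (xIdx i) * dualOp j t + if j = uIdx i then t else 0 := by
  fin_cases j <;> fin_cases i <;> simp [dualOp, pderiv_X, Fin.ext_iff]

theorem polarPair_X_mul (i : Fin 3) (p t : Poly6 A) :
    polarPair p (X (xIdx i) * t) = polarPair (pderiv (uIdx i) p) t := by
  induction p using MvPolynomial.induction_on generalizing t with
  | C c => simp [polarPair_C, polarPair_zero_left]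
  | add p q hp hq => simp only [polarPair_add_left, map_add, hp, hq]
  | mul_X p j hp =>
    rw [polarPair_mul_X, dualOp_X_mul, polarPair_add_right, hp, pderiv_mul, pderiv_X,
      polarPair_add_left, polarPair_mul_X, Pi.single_apply]
    split_ifs <;> simp [polarPair_zero_left, polarPair_zero_right]

theorem pderiv_xIdx_substOp (k : Fin 3) (j : Fin 6) (f : Poly6 A) :
    pderiv (xIdx k) (substOp j f) = substOp j (pderiv (xIdx k) f) := by
  fin_cases k <;> fin_cases j <;> simp [substOp, D1, D2, D3, pderiv_X, pderiv_comm (R := A)]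

theorem pderiv_uIdx_substOp (i : Fin 3) (j : Fin 6) (f : Poly6 A) :
    pderiv (uIdx i) (substOp j f) = substOp j (pderiv (uIdx i) f)
      + (if j = xIdx (i + 2) then pderiv (xIdx (i + 1)) f else 0)
      - (if j = xIdx (i + 1) then pderiv (xIdx (i + 2)) f else 0) := by
  fin_cases i <;> fin_cases j <;>
    simp [substOp, D1, D2, D3, pderiv_X, pderiv_comm (R := A)] <;> ring

theorem pderiv_xIdx_Jn (k : Fin 3) (a b : Poly6 A) :
    pderiv (xIdx k) (Jn a b) = Jn a (pderiv (xIdx k) b) := by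
  induction a using MvPolynomial.induction_on with
  | C c => rw [Jn_C, Jn_C, pderiv_C_mul]
  | add p q hp hq => rw [Jn_add_left, Jn_add_left, map_add, hp, hq]
  | mul_X p j hp => rw [Jn_mul_X, Jn_mul_X, pderiv_xIdx_substOp, hp]

theorem pderiv_uIdx_Jn (i : Fin 3) (a b : Poly6 A) :
    pderiv (uIdx i) (Jn a b) = Jn a (pderiv (uIdx i) b)
      + Jn (pderiv (xIdx (i + 2)) a) (pderiv (xIdx (i + 1)) b)
      - Jn (pderiv (xIdx (i + 1)) a) (pderiv (xIdx (i + 2)) b) := by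
  induction a using MvPolynomial.induction_on with
  | C c => simp [Jn_C, Jn_zero_left]
  | add p q hp hq => simp only [Jn_add_left, map_add, hp, hq]; abel
  | mul_X p j hp =>
    simp only [Jn_mul_X, pderiv_uIdx_substOp, hp, map_add, map_sub, pderiv_mul, pderiv_X,
      Pi.single_apply, pderiv_xIdx_Jn, Jn_add_left, mul_ite, mul_one, mul_zero]
    split_ifs <;> simp [Jn_zero_left] <;> abel

def IsTernaryForm (n : ℕ) (q : Poly6 A) : Prop :=
  q.IsHomogeneous n ∧ ∀ i : Fin 3, pderiv (uIdx i) q = 0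

theorem OnlyXYZ.pderiv_uIdx_eq_zero {q : Poly6 A} (h : OnlyXYZ q) (i : Fin 3) :
    pderiv (uIdx i) q = 0 := by
  ext m
  rw [coeff_pderiv, coeff_zero, notMem_support_iff.mp, zero_mul]
  intro hm
  have := h _ hm
  fin_cases i <;> simp at this

theorem IsTernaryForm.pderiv_xIdx {n : ℕ} {q : Poly6 A} (h : IsTernaryForm n q) (k : Fin 3) :
    IsTernaryForm (n - 1) (pderiv (xIdx k) q) :=
  ⟨h.1.pderiv, fun i => by rw [pderiv_comm, h.2 i, map_zero]⟩

theorem IsTernaryForm.eq_C {q : Poly6 A} (h : IsTernaryForm 0 q) : q = C (q.coeff 0) :=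
  totalDegree_eq_zero_iff_eq_C.mp ((totalDegree_zero_iff_isHomogeneous _).mpr h.1)

theorem IsTernaryForm.sum_X_mul_pderiv {n : ℕ} {q : Poly6 A} (h : IsTernaryForm n q) :
    ∑ k : Fin 3, X (xIdx k) * pderiv (xIdx k) q = n • q := by
  rw [← h.1.sum_X_mul_pderiv, Fin.sum_univ_six, Fin.sum_univ_three,
    show pderiv 3 q = 0 from h.2 0, show pderiv 4 q = 0 from h.2 1,
    show pderiv 5 q = 0 from h.2 2]
  simp

theorem tn_C (α β γ : A) : tn (C α) (C β) (C γ) = α * β * γ := by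
  rw [tn, Jn_C, ← C_mul, polarPair_C, constantCoeff_C]

theorem nsmul_tn_eq_sum {n : ℕ} (a : Poly6 A) {b c : Poly6 A}
    (hb : ∀ i : Fin 3, pderiv (uIdx i) b = 0) (hc : IsTernaryForm n c) :
    n • tn a b c = ∑ k : Fin 3,
      (tn (pderiv (xIdx (k + 2)) a) (pderiv (xIdx (k + 1)) b) (pderiv (xIdx k) c) -
        tn (pderiv (xIdx (k + 1)) a) (pderiv (xIdx (k + 2)) b) (pderiv (xIdx k) c)) := by
  rw [tn, ← polarPair_nsmul_right, ← hc.sum_X_mul_pderiv, polarPair_sum_right]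
  simp only [polarPair_X_mul, pderiv_uIdx_Jn, hb, Jn_zero_right, zero_add, polarPair_sub_left, tn]

theorem tn_symm [IsAddTorsionFree A] (n : ℕ) {a b c : Poly6 A} (ha : IsTernaryForm n a)
    (hb : IsTernaryForm n b) (hc : IsTernaryForm n c) :
    tn a b c = (-1) ^ n * tn b a c ∧ tn a b c = (-1) ^ n * tn a c b := by
  induction n generalizing a b c with
  | zero =>
    rw [ha.eq_C, hb.eq_C, hc.eq_C, tn_C, tn_C, tn_C]
    constructor <;> ring
  | succ n ih =>
    have hε : (-1 : A) ^ (n + 1) * (-1) ^ n = -1 := by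
      rw [pow_succ, mul_right_comm, ← mul_pow]
      simp
    have cancel := IsAddTorsionFree.nsmul_right_injective (M := A) n.add_one_ne_zero
    constructor
    · apply cancel
      dsimp only
      rw [← mul_smul_comm, nsmul_tn_eq_sum a hb.2 hc, nsmul_tn_eq_sum b ha.2 hc, Finset.mul_sum]
      refine Finset.sum_congr rfl fun k _ => ?_
      rw [(ih (hb.pderiv_xIdx (k + 2)) (ha.pderiv_xIdx (k + 1)) (hc.pderiv_xIdx k)).1,
        (ih (hb.pderiv_xIdx (k + 1)) (ha.pderiv_xIdx (k + 2)) (hc.pderiv_xIdx k)).1,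
        ← mul_sub, ← mul_assoc, hε]
      ring
    · apply cancel
      dsimp only
      have swapped : (n + 1) • tn a c b = (-1) ^ n * ∑ k : Fin 3,
          (tn (pderiv (xIdx (k + 2)) a) (pderiv (xIdx k) b) (pderiv (xIdx (k + 1)) c) -
            tn (pderiv (xIdx (k + 1)) a) (pderiv (xIdx k) b) (pderiv (xIdx (k + 2)) c)) := by
        rw [nsmul_tn_eq_sum a hc.2 hb, Finset.mul_sum]
        refine Finset.sum_congr rfl fun k _ => ?_
        rw [(ih (ha.pderiv_xIdx (k + 2)) (hc.pderiv_xIdx (k + 1)) (hb.pderiv_xIdx k)).2,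
          (ih (ha.pderiv_xIdx (k + 1)) (hc.pderiv_xIdx (k + 2)) (hb.pderiv_xIdx k)).2, mul_sub]
      rw [← mul_smul_comm, swapped, Fin.sum_cyclic_swap
          (fun i j k => tn (pderiv (xIdx i) a) (pderiv (xIdx j) b) (pderiv (xIdx k) c)),
        ← nsmul_tn_eq_sum a hb.2 hc, ← mul_assoc, hε]
      ring

end

/-- For every traceless derivation `g ∈ 𝔰𝔩₃` and every ternary form `q` of degree
`n`, the identity `⟨h_n(q), g·q⟩ = 0` holds. -/
theorem statement10 (n : ℕ) (g : Matrix (Fin 3) (Fin 3) ℤ) (htr : g.trace = 0)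
    (q : Poly6 ℤ) (hhom : q.IsHomogeneous n) (hxyz : OnlyXYZ q) :
    polarPair (hn q) (slAction g q) = 0 := by
  have hq : IsTernaryForm n q := ⟨hhom, hxyz.pderiv_uIdx_eq_zero⟩
  let τ (i j k : Fin 3) : ℤ := tn (pderiv (xIdx i) q) (pderiv (xIdx j) q) (pderiv (xIdx k) q)
  have hτ (i j k : Fin 3) :=
    tn_symm (n - 1) (hq.pderiv_xIdx i) (hq.pderiv_xIdx j) (hq.pderiv_xIdx k)
  have expand : polarPair (hn q) (slAction g q) =
      ∑ i, ∑ j, g i j * (τ (i + 2) (i + 1) j - τ (i + 1) (i + 2) j) := by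
    simp only [slAction, C_mul', polarPair_sum_right, polarPair_smul_right, polarPair_X_mul, hn,
      pderiv_uIdx_Jn, hq.2, Jn_zero_right, zero_add, polarPair_sub_left]
    rfl
  rw [expand, Matrix.sum_mul_cyclic_sub g τ _ (by rw [← mul_pow]; simp)
    (fun i j k => (hτ i j k).1) (fun i j k => (hτ i j k).2), htr, mul_zero]
end

section
/- The five points [ρ:σ1:σ2:σ3:τ1:τ2:τ3] = [1:0:0:0:0:0:0], [1:−6:−6:−6:0:0:0], [1:−6:6:6:0:0:0], [1:6:−6:6:0:0:0], [1:6:6:−6:0:0:0] are exactly the common zeros in P⁶ over an algebraically closed field of characteristic 0 of the 14 forms σ3²−σ2², σ3²−σ1², σ1τ2, σ2τ1, σ3τ1, σ1τ3, σ2τ3, σ3τ2, 12ρσ1+2σ2σ3+τ1², 12ρσ2+2σ1σ3+τ2², 12ρσ3+2σ1σ2+τ3², 4σ1τ1−τ2τ3, 4σ2τ2−τ1τ3, 4σ3τ3−τ1τ2. -/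
lemma vec7_val5 {α : Type*} (a0 a1 a2 a3 a4 a5 a6 : α) :
    ![a0,a1,a2,a3,a4,a5,a6] 5 = a5 := rfl

lemma vec7_val6 {α : Type*} (a0 a1 a2 a3 a4 a5 a6 : α) :
    ![a0,a1,a2,a3,a4,a5,a6] 6 = a6 := rfl

/-- Over an algebraically closed field `k` of characteristic `0`, a point
`[ρ:σ1:σ2:σ3:τ1:τ2:τ3]` of `ℙ⁶` (represented by a nonzero vector `p`) is a common zero
of the 14 listed forms if and only if it is one of the five points
`[1:0:0:0:0:0:0]`, `[1:−6:−6:−6:0:0:0]`, `[1:−6:6:6:0:0:0]`, `[1:6:−6:6:0:0:0]`,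
`[1:6:6:−6:0:0:0]`. -/
theorem statement15 (k : Type*) [Field k] [IsAlgClosed k] [CharZero k]
    (p : Fin 7 → k) (hp : p ≠ 0) :
    (p 3 ^ 2 - p 2 ^ 2 = 0 ∧ p 3 ^ 2 - p 1 ^ 2 = 0 ∧
        p 1 * p 5 = 0 ∧ p 2 * p 4 = 0 ∧ p 3 * p 4 = 0 ∧
        p 1 * p 6 = 0 ∧ p 2 * p 6 = 0 ∧ p 3 * p 5 = 0 ∧
        12 * p 0 * p 1 + 2 * p 2 * p 3 + p 4 ^ 2 = 0 ∧
        12 * p 0 * p 2 + 2 * p 1 * p 3 + p 5 ^ 2 = 0 ∧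
        12 * p 0 * p 3 + 2 * p 1 * p 2 + p 6 ^ 2 = 0 ∧
        4 * p 1 * p 4 - p 5 * p 6 = 0 ∧
        4 * p 2 * p 5 - p 4 * p 6 = 0 ∧
        4 * p 3 * p 6 - p 4 * p 5 = 0) ↔
      ∃ c : k, c ≠ 0 ∧
        (p = c • ![1, 0, 0, 0, 0, 0, 0] ∨
          p = c • ![1, -6, -6, -6, 0, 0, 0] ∨
          p = c • ![1, -6, 6, 6, 0, 0, 0] ∨
          p = c • ![1, 6, -6, 6, 0, 0, 0] ∨
          p = c • ![1, 6, 6, -6, 0, 0, 0]) := by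
  constructor
  · rintro ⟨h1, h2, h3, h4, h5, h6, h7, h8, h9, h10, h11, h12, h13, h14⟩
    by_cases hσ : p 1 = 0
    · -- all σ vanish, then all τ vanish, and ρ ≠ 0
      have e3 : p 3 = 0 := by
        have : p 3 ^ 2 = 0 := by rw [hσ] at h2; linear_combination h2
        exact pow_eq_zero_iff two_ne_zero |>.mp this
      have e2 : p 2 = 0 := by
        have : p 2 ^ 2 = 0 := by rw [e3] at h1; linear_combination -h1
        exact pow_eq_zero_iff two_ne_zero |>.mp this
      have e4 : p 4 = 0 := by
        have : p 4 ^ 2 = 0 := by rw [hσ, e2, e3] at h9; linear_combination h9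
        exact pow_eq_zero_iff two_ne_zero |>.mp this
      have e5 : p 5 = 0 := by
        have : p 5 ^ 2 = 0 := by rw [hσ, e2, e3] at h10; linear_combination h10
        exact pow_eq_zero_iff two_ne_zero |>.mp this
      have e6 : p 6 = 0 := by
        have : p 6 ^ 2 = 0 := by rw [hσ, e2, e3] at h11; linear_combination h11
        exact pow_eq_zero_iff two_ne_zero |>.mp this
      have hp0 : p 0 ≠ 0 := by
        intro h0
        apply hp
        funext i
        fin_cases i
        exacts [h0, hσ, e2, e3, e4, e5, e6]
      refine ⟨p 0, hp0, Or.inl ?_⟩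
      funext i
      fin_cases i <;>
        simp [vec7_val5, vec7_val6, hσ, e2, e3, e4, e5, e6]
    · -- σ1 ≠ 0, hence all σ nonzero and all τ vanish
      have hσ3 : p 3 ≠ 0 := by
        intro h0
        apply hσ
        have : p 1 ^ 2 = 0 := by rw [h0] at h2; linear_combination -h2
        exact pow_eq_zero_iff two_ne_zero |>.mp this
      have hσ2 : p 2 ≠ 0 := by
        intro h0
        apply hσ3
        have : p 3 ^ 2 = 0 := by rw [h0] at h1; linear_combination h1
        exact pow_eq_zero_iff two_ne_zero |>.mp this
      have e5 : p 5 = 0 := (mul_eq_zero.mp h3).resolve_left hσ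
      have e4 : p 4 = 0 := (mul_eq_zero.mp h4).resolve_left hσ2
      have e6 : p 6 = 0 := (mul_eq_zero.mp h6).resolve_left hσ
      rw [e4] at h9
      rw [e5] at h10
      rw [e6] at h11
      have hp0 : p 0 ≠ 0 := by
        intro h0
        rw [h0] at h9
        have : p 2 * p 3 = 0 := by linear_combination h9 / 2
        rcases mul_eq_zero.mp this with h | h
        exacts [hσ2 h, hσ3 h]
      -- p 2 and p 3 are ±6 * p 0
      have hsq2 : (p 2 - 6 * p 0) * (p 2 + 6 * p 0) = 0 := by
        have key : p 1 * ((p 2 - 6 * p 0) * (p 2 + 6 * p 0)) = 0 := by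
          linear_combination (-3 * p 0) * h9 + (p 2 / 2) * h11
        rcases mul_eq_zero.mp key with h | h
        exacts [absurd h hσ, h]
      have hsq3 : (p 3 - 6 * p 0) * (p 3 + 6 * p 0) = 0 := by
        have key : p 1 * ((p 3 - 6 * p 0) * (p 3 + 6 * p 0)) = 0 := by
          linear_combination (-3 * p 0) * h9 + (p 3 / 2) * h10
        rcases mul_eq_zero.mp key with h | h
        exacts [absurd h hσ, h]
      have h12p0 : (12 : k) * p 0 ≠ 0 := by
        simp [hp0]
      rcases mul_eq_zero.mp hsq2 with h2' | h2' <;> rcases mul_eq_zero.mp hsq3 with h3' | h3'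
      · -- p 2 = 6 p 0, p 3 = 6 p 0, hence p 1 = -6 p 0
        have e2 : p 2 = 6 * p 0 := by linear_combination h2'
        have e3 : p 3 = 6 * p 0 := by linear_combination h3'
        have e1 : p 1 = -6 * p 0 := by
          apply mul_left_cancel₀ h12p0
          linear_combination h9 - 2 * p 3 * e2 - 12 * p 0 * e3
        refine ⟨p 0, hp0, Or.inr (Or.inr (Or.inl ?_))⟩
        funext i
        fin_cases i <;> simp [vec7_val5, vec7_val6, e1, e2, e3, e4, e5, e6] <;> ring
      · -- p 2 = 6 p 0, p 3 = -6 p 0, hence p 1 = 6 p 0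
        have e2 : p 2 = 6 * p 0 := by linear_combination h2'
        have e3 : p 3 = -6 * p 0 := by linear_combination h3'
        have e1 : p 1 = 6 * p 0 := by
          apply mul_left_cancel₀ h12p0
          linear_combination h9 - 2 * p 3 * e2 - 12 * p 0 * e3
        refine ⟨p 0, hp0, Or.inr (Or.inr (Or.inr (Or.inr ?_)))⟩
        funext i
        fin_cases i <;> simp [vec7_val5, vec7_val6, e1, e2, e3, e4, e5, e6] <;> ring
      · -- p 2 = -6 p 0, p 3 = 6 p 0, hence p 1 = 6 p 0
        have e2 : p 2 = -6 * p 0 := by linear_combination h2'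
        have e3 : p 3 = 6 * p 0 := by linear_combination h3'
        have e1 : p 1 = 6 * p 0 := by
          apply mul_left_cancel₀ h12p0
          linear_combination h9 - 2 * p 3 * e2 + 12 * p 0 * e3
        refine ⟨p 0, hp0, Or.inr (Or.inr (Or.inr (Or.inl ?_)))⟩
        funext i
        fin_cases i <;> simp [vec7_val5, vec7_val6, e1, e2, e3, e4, e5, e6] <;> ring
      · -- p 2 = -6 p 0, p 3 = -6 p 0, hence p 1 = -6 p 0
        have e2 : p 2 = -6 * p 0 := by linear_combination h2'
        have e3 : p 3 = -6 * p 0 := by linear_combination h3'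
        have e1 : p 1 = -6 * p 0 := by
          apply mul_left_cancel₀ h12p0
          linear_combination h9 - 2 * p 3 * e2 + 12 * p 0 * e3
        refine ⟨p 0, hp0, Or.inr (Or.inl ?_)⟩
        funext i
        fin_cases i <;> simp [vec7_val5, vec7_val6, e1, e2, e3, e4, e5, e6] <;> ring
  · rintro ⟨c, hc, h | h | h | h | h⟩ <;> subst h <;>
      refine ⟨?_, ?_, ?_, ?_, ?_, ?_, ?_, ?_, ?_, ?_, ?_, ?_, ?_, ?_⟩ <;>
      (simp only [Pi.smul_apply, Matrix.cons_val_zero, Matrix.cons_val_one, Matrix.head_cons,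
        Matrix.cons_val_two, Matrix.tail_cons, Matrix.cons_val_three, Matrix.cons_val_four,
        vec7_val5, vec7_val6, smul_eq_mul]; ring)
end

section
/- Consider the affine solution set in k⁶ (with ρ = 1, k algebraically closed of characteristic 0) of the system σ3² = σ2² = σ1², σ1τ2 = σ2τ1 = σ3τ1 = σ1τ3 = σ2τ3 = σ3τ2 = 0, 12σ1+2σ2σ3+τ1² = 0, 12σ2+2σ1σ3+τ2² = 0, 12σ3+2σ1σ2+τ3² = 0, 4σ1τ1 = τ2τ3, 4σ2τ2 = τ1τ3, 4σ3τ3 = τ1τ2. If σ1σ2σ3 ≠ 0, then τ1 = τ2 = τ3 = 0 and (σ1,σ2,σ3) ∈ {(−6,−6,−6), (−6,6,6), (6,−6,6), (6,6,−6)}. -/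
/-- For the affine system (with `ρ = 1`) over an algebraically closed field of
characteristic `0`: if `σ1σ2σ3 ≠ 0`, then `τ1 = τ2 = τ3 = 0` and
`(σ1,σ2,σ3) ∈ {(−6,−6,−6), (−6,6,6), (6,−6,6), (6,6,−6)}`. -/
theorem statement16 (k : Type*) [Field k] [IsAlgClosed k] [CharZero k]
    (σ1 σ2 σ3 τ1 τ2 τ3 : k)
    (h12 : σ3 ^ 2 = σ2 ^ 2) (h13 : σ2 ^ 2 = σ1 ^ 2)
    (e1 : σ1 * τ2 = 0) (e2 : σ2 * τ1 = 0) (e3 : σ3 * τ1 = 0)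
    (e4 : σ1 * τ3 = 0) (e5 : σ2 * τ3 = 0) (e6 : σ3 * τ2 = 0)
    (s1 : 12 * σ1 + 2 * σ2 * σ3 + τ1 ^ 2 = 0)
    (s2 : 12 * σ2 + 2 * σ1 * σ3 + τ2 ^ 2 = 0)
    (s3 : 12 * σ3 + 2 * σ1 * σ2 + τ3 ^ 2 = 0)
    (t1 : 4 * σ1 * τ1 = τ2 * τ3) (t2 : 4 * σ2 * τ2 = τ1 * τ3) (t3 : 4 * σ3 * τ3 = τ1 * τ2)
    (hnz : σ1 * σ2 * σ3 ≠ 0) :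
    τ1 = 0 ∧ τ2 = 0 ∧ τ3 = 0 ∧
      ((σ1, σ2, σ3) = (-6, -6, -6) ∨ (σ1, σ2, σ3) = (-6, 6, 6) ∨
        (σ1, σ2, σ3) = (6, -6, 6) ∨ (σ1, σ2, σ3) = (6, 6, -6)) := by
  have h1 : σ1 ≠ 0 := fun h => hnz (by rw [h]; ring)
  have h2 : σ2 ≠ 0 := fun h => hnz (by rw [h]; ring)
  have h3 : σ3 ≠ 0 := fun h => hnz (by rw [h]; ring)
  have hτ1 : τ1 = 0 := (mul_eq_zero.mp e2).resolve_left h2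
  have hτ2 : τ2 = 0 := (mul_eq_zero.mp e1).resolve_left h1
  have hτ3 : τ3 = 0 := (mul_eq_zero.mp e4).resolve_left h1
  refine ⟨hτ1, hτ2, hτ3, ?_⟩
  rw [hτ1] at s1
  have hc2 : σ2 = σ1 ∨ σ2 = -σ1 := by
    rcases mul_eq_zero.mp (show (σ2 - σ1) * (σ2 + σ1) = 0 by linear_combination h13) with h | h
    · exact Or.inl (sub_eq_zero.mp h)
    · exact Or.inr (eq_neg_of_add_eq_zero_left h)
  have hc3 : σ3 = σ2 ∨ σ3 = -σ2 := by
    rcases mul_eq_zero.mp (show (σ3 - σ2) * (σ3 + σ2) = 0 by linear_combination h12) with h | h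
    · exact Or.inl (sub_eq_zero.mp h)
    · exact Or.inr (eq_neg_of_add_eq_zero_left h)
  rcases hc2 with h2e | h2e <;> rcases hc3 with h3e | h3e <;> rw [h3e, h2e] at s1
  · -- σ2 = σ1, σ3 = σ1 : 12σ1 + 2σ1² = 0 ⇒ σ1 = -6
    have hv : σ1 = -6 :=
      mul_left_cancel₀ h1 (show σ1 * σ1 = σ1 * (-6) by linear_combination (1/2 : k) * s1)
    exact Or.inl (by rw [Prod.mk.injEq, Prod.mk.injEq]
                     exact ⟨hv, ⟨by simp [h2e, hv], by simp [h3e, h2e, hv]⟩⟩)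
  · -- σ2 = σ1, σ3 = -σ1 : σ1 = 6 ⇒ (6,6,-6)
    have hv : σ1 = 6 :=
      mul_left_cancel₀ h1 (show σ1 * σ1 = σ1 * 6 by linear_combination -(1/2 : k) * s1)
    refine Or.inr (Or.inr (Or.inr ?_))
    rw [Prod.mk.injEq, Prod.mk.injEq]
    exact ⟨hv, ⟨by simp [h2e, hv], by simp [h3e, h2e, hv]⟩⟩
  · -- σ2 = -σ1, σ3 = σ2 = -σ1 : σ1 = -6 ⇒ (-6,6,6)
    have hv : σ1 = -6 :=
      mul_left_cancel₀ h1 (show σ1 * σ1 = σ1 * (-6) by linear_combination (1/2 : k) * s1)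
    refine Or.inr (Or.inl ?_)
    rw [Prod.mk.injEq, Prod.mk.injEq]
    exact ⟨hv, ⟨by simp [h2e, hv], by simp [h3e, h2e, hv]⟩⟩
  · -- σ2 = -σ1, σ3 = -σ2 = σ1 : σ1 = 6 ⇒ (6,-6,6)
    have hv : σ1 = 6 :=
      mul_left_cancel₀ h1 (show σ1 * σ1 = σ1 * 6 by linear_combination -(1/2 : k) * s1)
    refine Or.inr (Or.inr (Or.inl ?_))
    rw [Prod.mk.injEq, Prod.mk.injEq]
    exact ⟨hv, ⟨by simp [h2e, hv], by simp [h3e, h2e, hv]⟩⟩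
end
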